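/- arXiv:1304.6906 — 9 statements merged into one kernel-verified Lean document; each statement's English description precedes it below -/
import Mathlib

section
/- Let G = (A, B, E) be a bipartite graph, let A' ⊆ A satisfy |Γ(A')| ≤ |A'|, and suppose that for every A'' ⊆ A' we have |Γ(A'')|/|A''| ≥ |Γ(A')|/|A'|. Then there exists a semi-matching of A' into B (using edges of E) whose maximal degree is at most ⌈|A'|/|Γ(A')|⌉; equivalently, every optimal semi-matching of (A', B, E) has maximal degree at most ⌈|A'|/|Γ(A')|⌉. -/
open Finset

variable {α β : Type*} [Fintype α] [Fintype β] [DecidableEq α] [DecidableEq β]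

/-- Degree of a vertex `b ∈ B` with respect to an edge set `S`. -/
def degB (S : Finset (α × β)) (b : β) : ℕ := (S.filter fun e => e.2 = b).card

/-- Degree of a vertex `a ∈ A` with respect to an edge set `S`. -/
def degA (S : Finset (α × β)) (a : α) : ℕ := (S.filter fun e => e.1 = a).card

/-- Maximal degree of a vertex with respect to an edge set `S`. -/
def maxDeg (S : Finset (α × β)) : ℕ :=
  max (Finset.univ.sup (degA S)) (Finset.univ.sup (degB S))

/-- `S` is a semi-matching of `A'` into `B` using edges of `E`. -/
def IsSemi (A' : Finset α) (E S : Finset (α × β)) : Prop :=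
  S ⊆ E ∧ (∀ e ∈ S, e.1 ∈ A') ∧ ∀ a ∈ A', degA S a = 1

/-- An optimal semi-matching of `A'` into `B` using edges of `E`:
a semi-matching minimizing the maximal degree. -/
def IsOptSemi (A' : Finset α) (E S : Finset (α × β)) : Prop :=
  IsSemi A' E S ∧ ∀ T, IsSemi A' E T → maxDeg S ≤ maxDeg T

/-- Neighborhood of a set `X ⊆ A` of vertices with respect to an edge set `E`. -/
def nbr (E : Finset (α × β)) (X : Finset α) : Finset β :=
  Finset.univ.filter fun b => ∃ a ∈ X, (a, b) ∈ E


lemma mem_nbr (E : Finset (α × β)) (X : Finset α) (b : β) :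
    b ∈ nbr E X ↔ ∃ a ∈ X, (a, b) ∈ E := by simp [nbr]

/-- If `A' ⊆ A` satisfies `|Γ(A')| ≤ |A'|` and every nonempty `A'' ⊆ A'` has expansion at
least that of `A'`, then every optimal semi-matching of `(A', B, E)` has maximal degree
at most `⌈|A'| / |Γ(A')|⌉`. -/
theorem optSemi_maxDeg_le_ceil_of_min_expansion (E : Finset (α × β)) (A' : Finset α)
    (h1 : (nbr E A').card ≤ A'.card)
    (h2 : ∀ A'' ⊆ A', A''.Nonempty →
      ((nbr E A').card : ℚ) / (A'.card : ℚ) ≤ ((nbr E A'').card : ℚ) / (A''.card : ℚ)) :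
    ∀ S : Finset (α × β), IsOptSemi A' E S →
      (maxDeg S : ℤ) ≤ ⌈(A'.card : ℚ) / ((nbr E A').card : ℚ)⌉ := by
  intro S hS
  obtain ⟨hSsemi, hopt⟩ := hS
  by_cases hA : A'.Nonempty
  · -- main case
    obtain ⟨a0, ha0⟩ := hA
    have hApos : 0 < A'.card := card_pos.mpr ⟨a0, ha0⟩
    -- Γ(A') is nonempty, since S is a semi-matching
    have hdeg : (S.filter fun e => e.1 = a0).card = 1 := hSsemi.2.2 a0 ha0
    obtain ⟨e0, he0⟩ : (S.filter fun e => e.1 = a0).Nonempty := by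
      rw [← card_pos, hdeg]; norm_num
    rw [mem_filter] at he0
    have hNpos : 0 < (nbr E A').card := by
      apply card_pos.mpr
      refine ⟨e0.2, (mem_nbr E A' e0.2).mpr ⟨a0, ha0, ?_⟩⟩
      have := hSsemi.1 he0.1
      rwa [← he0.2, Prod.mk.eta]
    set N : ℕ := (nbr E A').card with hNdef
    set q : ℚ := (A'.card : ℚ) / (N : ℚ) with hqdef
    have hqpos : 0 < q := by
      apply div_pos <;> exact_mod_cast (by assumption)
    have hceilpos : 0 < ⌈q⌉ := Int.ceil_pos.mpr hqpos
    set k : ℕ := (⌈q⌉).toNat with hkdef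
    have hkcast : (k : ℤ) = ⌈q⌉ := Int.toNat_of_nonneg hceilpos.le
    have hk1 : 1 ≤ k := by omega
    have hkq : q ≤ (k : ℚ) := by
      have h' : q ≤ (⌈q⌉ : ℚ) := Int.le_ceil q
      have : ((k : ℤ) : ℚ) = (⌈q⌉ : ℚ) := by exact_mod_cast hkcast
      push_cast at this ⊢
      linarith
    have hkN : (A'.card : ℚ) ≤ (k : ℚ) * (N : ℚ) := by
      have hN' : (0:ℚ) < (N:ℚ) := by exact_mod_cast hNpos
      rw [hqdef, div_le_iff₀ hN'] at hkq
      linarith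
    -- Hall-type cardinality bound for all nonempty X ⊆ A'
    have hHallNat : ∀ X ⊆ A', X.Nonempty → X.card ≤ k * (nbr E X).card := by
      intro X hX hXne
      have hXpos : (0:ℚ) < (X.card : ℚ) := by
        exact_mod_cast card_pos.mpr hXne
      have hApos' : (0:ℚ) < (A'.card : ℚ) := by exact_mod_cast hApos
      have h := h2 X hX hXne
      rw [div_le_div_iff₀ hApos' hXpos] at h
      have : (X.card : ℚ) ≤ (k : ℚ) * ((nbr E X).card : ℚ) := by
        have hN' : (0:ℚ) < (N:ℚ) := by exact_mod_cast hNpos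
        have hG : (0:ℚ) ≤ ((nbr E X).card : ℚ) := by positivity
        nlinarith [mul_le_mul_of_nonneg_left hkN hG]
      exact_mod_cast this
    -- Hall's theorem with each b ∈ B duplicated k times
    set t : {x // x ∈ A'} → Finset (β × Fin k) :=
      fun a => (nbr E {a.1}) ×ˢ Finset.univ with htdef
    have hall : ∀ s : Finset {x // x ∈ A'}, s.card ≤ (s.biUnion t).card := by
      intro s
      rcases s.eq_empty_or_nonempty with hs | hs
      · simp [hs]
      set X : Finset α := s.image (fun a => a.1) with hXdef
      have hXsub : X ⊆ A' := by
        intro x hx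
        rw [hXdef, mem_image] at hx
        obtain ⟨a, _, rfl⟩ := hx
        exact a.2
      have hXne : X.Nonempty := hs.image _
      have hXcard : X.card = s.card :=
        card_image_of_injective _ Subtype.val_injective
      have hb : s.biUnion t = (nbr E X) ×ˢ Finset.univ := by
        ext ⟨b, i⟩
        simp only [mem_biUnion, htdef, mem_product, mem_univ, and_true, mem_nbr,
          hXdef, mem_image, mem_singleton]
        constructor
        · rintro ⟨a, ha, a', rfl, hE⟩
          exact ⟨a.1, ⟨a, ha, rfl⟩, hE⟩
        · rintro ⟨x, ⟨a, ha, rfl⟩, hE⟩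
          exact ⟨a, ha, a.1, rfl, hE⟩
      rw [hb, card_product, card_univ, Fintype.card_fin]
      calc s.card = X.card := hXcard.symm
        _ ≤ k * (nbr E X).card := hHallNat X hXsub hXne
        _ = (nbr E X).card * k := Nat.mul_comm _ _
    obtain ⟨f, hfinj, hf⟩ :=
      (Finset.all_card_le_biUnion_card_iff_exists_injective t).mp hall
    have hfE : ∀ a : {x // x ∈ A'}, (a.1, (f a).1) ∈ E := by
      intro a
      have := hf a
      rw [htdef, mem_product, mem_nbr] at this
      obtain ⟨⟨a', ha', hE⟩, -⟩ := this
      rw [mem_singleton] at ha'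
      rwa [ha'] at hE
    set T : Finset (α × β) := A'.attach.image (fun a => (a.1, (f a).1)) with hTdef
    -- degA T a = 1 for a ∈ A'
    have hdegA1 : ∀ a ∈ A', degA T a = 1 := by
      intro a ha
      have hfilt : T.filter (fun e => e.1 = a) = {(a, (f ⟨a, ha⟩).1)} := by
        ext e
        rw [mem_filter, mem_singleton, hTdef, mem_image]
        constructor
        · rintro ⟨⟨a', -, rfl⟩, h⟩
          simp only at h
          subst h
          rfl
        · rintro rfl
          exact ⟨⟨⟨a, ha⟩, mem_attach _ _, rfl⟩, rfl⟩
      rw [degA, hfilt, card_singleton]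
    have hIsSemiT : IsSemi A' E T := by
      refine ⟨?_, ?_, hdegA1⟩
      · intro e he
        rw [hTdef, mem_image] at he
        obtain ⟨a, -, rfl⟩ := he
        exact hfE a
      · intro e he
        rw [hTdef, mem_image] at he
        obtain ⟨a, -, rfl⟩ := he
        exact a.2
    -- degA T a ≤ 1 for all a
    have hdegAle : ∀ a : α, degA T a ≤ k := by
      intro a
      by_cases ha : a ∈ A'
      · rw [hdegA1 a ha]; exact hk1
      · have : T.filter (fun e => e.1 = a) = ∅ := by
          rw [filter_eq_empty_iff]
          intro e he h
          exact ha (h ▸ hIsSemiT.2.1 e he)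
        rw [degA, this, card_empty]
        exact Nat.zero_le _
    -- degB T b ≤ k
    have hdegBle : ∀ b : β, degB T b ≤ k := by
      intro b
      rw [degB, hTdef, Finset.filter_image]
      calc (Finset.image (fun a => (a.1, (f a).1))
              (A'.attach.filter fun a => (f a).1 = b)).card
          ≤ (A'.attach.filter fun a => (f a).1 = b).card := card_image_le
        _ ≤ (Finset.univ : Finset (Fin k)).card := by
            apply card_le_card_of_injOn (fun a => (f a).2)
            · intro a _; exact mem_univ _
            · intro a ha a' ha' hEq
              simp only [coe_filter, Set.mem_setOf_eq] at ha ha'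
              apply hfinj
              exact Prod.ext (ha.2.trans ha'.2.symm) hEq
        _ = k := by rw [card_univ, Fintype.card_fin]
    have hmaxT : maxDeg T ≤ k := by
      rw [maxDeg]
      apply max_le
      · exact Finset.sup_le fun a _ => hdegAle a
      · exact Finset.sup_le fun b _ => hdegBle b
    have hle : maxDeg S ≤ k := le_trans (hopt T hIsSemiT) hmaxT
    calc (maxDeg S : ℤ) ≤ (k : ℤ) := by exact_mod_cast hle
      _ = ⌈q⌉ := hkcast
  · -- A' is empty
    rw [not_nonempty_iff_eq_empty] at hA
    subst hA
    have hT : IsSemi (∅ : Finset α) E ∅ := by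
      refine ⟨empty_subset _, ?_, ?_⟩ <;> simp
    have h0 : maxDeg (∅ : Finset (α × β)) = 0 := by
      rw [maxDeg]
      simp [degA, degB]
    have := hopt ∅ hT
    rw [h0, Nat.le_zero] at this
    rw [this]
    simp
end

section
/- Let G = (A, B, E) be a bipartite graph with |A| = n, let d be the maximal degree of an optimal semi-matching of G, and let α = min over nonempty A' ⊆ A of |Γ(A')|/|A'|. Then d = ⌈1/α⌉. -/
open Finset

variable {α β : Type*} [Fintype α] [Fintype β] [DecidableEq α] [DecidableEq β]

/-- The maximal degree of an optimal semi-matching equals `⌈1/α⌉`, where `α` is the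
minimal expansion `|Γ(A')|/|A'|` over nonempty subsets `A' ⊆ A`. -/
theorem optSemi_maxDeg_eq_ceil_inv_expansion (E S : Finset (α × β)) (A' : Finset α)
    (hA' : A'.Nonempty)
    (hmin : ∀ A'' : Finset α, A''.Nonempty →
      ((nbr E A').card : ℚ) / (A'.card : ℚ) ≤ ((nbr E A'').card : ℚ) / (A''.card : ℚ))
    (hdeg : ∀ a : α, ∃ b : β, (a, b) ∈ E)
    (hS : IsOptSemi Finset.univ E S) :
    (maxDeg S : ℤ) = ⌈(((nbr E A').card : ℚ) / (A'.card : ℚ))⁻¹⌉ := by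
  classical
  set N := (nbr E A').card with hN
  set m := A'.card with hm
  have hmpos : 0 < m := hA'.card_pos
  have hNpos : 0 < N := by
    obtain ⟨a, ha⟩ := hA'
    obtain ⟨b, hb⟩ := hdeg a
    refine card_pos.mpr ⟨b, ?_⟩
    simp only [nbr, mem_filter, mem_univ, true_and]
    exact ⟨a, ha, hb⟩
  have hinv : (((N : ℚ)) / (m : ℚ))⁻¹ = (m : ℚ) / N := by
    rw [inv_div]
  rw [hinv]
  set k : ℕ := (⌈(m : ℚ) / N⌉).toNat with hk
  have hceil_pos : 0 < ⌈(m : ℚ) / N⌉ := by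
    apply Int.ceil_pos.mpr
    positivity
  have hkk : (k : ℤ) = ⌈(m : ℚ) / N⌉ := Int.toNat_of_nonneg hceil_pos.le
  have hk1 : 1 ≤ k := by omega
  have hkge : (m : ℚ) / N ≤ (k : ℚ) := by
    have := Int.le_ceil ((m : ℚ) / N)
    rwa [← hkk, Int.cast_natCast] at this
  -- the neighborhood function
  set t : α → Finset β := fun a => Finset.univ.filter (fun b => (a, b) ∈ E) with ht
  have hnbr_biUnion : ∀ X : Finset α, nbr E X = X.biUnion t := by
    intro X
    ext b
    simp [nbr, ht, mem_biUnion]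
  -- Upper bound: there is a semi-matching T with maxDeg T ≤ k
  have hHall : ∀ s : Finset α, s.card ≤ (s.biUnion (fun a => (t a) ×ˢ (Finset.univ : Finset (Fin k)))).card := by
    intro s
    rcases s.eq_empty_or_nonempty with rfl | hs
    · simp
    · have hbi : s.biUnion (fun a => (t a) ×ˢ (Finset.univ : Finset (Fin k)))
          = (s.biUnion t) ×ˢ (Finset.univ : Finset (Fin k)) := by
        ext ⟨b, i⟩
        simp [mem_biUnion, mem_product]
      rw [hbi, card_product, card_univ, Fintype.card_fin]
      -- need s.card ≤ (s.biUnion t).card * k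
      have hmin' := hmin s hs
      rw [hnbr_biUnion] at hmin'
      have hspos : 0 < s.card := hs.card_pos
      have hΓpos : 0 < (s.biUnion t).card := by
        obtain ⟨a, ha⟩ := hs
        obtain ⟨b, hb⟩ := hdeg a
        exact card_pos.mpr ⟨b, mem_biUnion.mpr ⟨a, ha, by simp [ht, hb]⟩⟩
      -- from N/m ≤ Γ/s and m/N ≤ k : s ≤ Γ * k
      have h1 : (s.card : ℚ) ≤ ((s.biUnion t).card : ℚ) * k := by
        have h2 : (N : ℚ) / m ≤ ((s.biUnion t).card : ℚ) / s.card := hmin'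
        have hNq : (0:ℚ) < N := by exact_mod_cast hNpos
        have hmq : (0:ℚ) < m := by exact_mod_cast hmpos
        have hsq : (0:ℚ) < s.card := by exact_mod_cast hspos
        have h3 : (s.card : ℚ) ≤ ((s.biUnion t).card : ℚ) * ((m:ℚ)/N) := by
          rw [div_le_div_iff₀ hmq hsq] at h2
          rw [mul_div_assoc', le_div_iff₀ hNq]
          linarith
        calc (s.card : ℚ) ≤ ((s.biUnion t).card : ℚ) * ((m:ℚ)/N) := h3
          _ ≤ ((s.biUnion t).card : ℚ) * k := by
              apply mul_le_mul_of_nonneg_left hkge (by positivity)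
      exact_mod_cast h1
  obtain ⟨f, hfinj, hft⟩ := (Finset.all_card_le_biUnion_card_iff_exists_injective
    (fun a => (t a) ×ˢ (Finset.univ : Finset (Fin k)))).mp hHall
  -- build T
  set T : Finset (α × β) := Finset.univ.image (fun a => (a, (f a).1)) with hT
  have hTmem : ∀ a : α, (a, (f a).1) ∈ T := fun a => mem_image.mpr ⟨a, mem_univ a, rfl⟩
  have hTE : T ⊆ E := by
    intro e he
    obtain ⟨a, -, rfl⟩ := mem_image.mp he
    have := hft a
    rw [mem_product] at this
    have := this.1
    simpa [ht] using this
  have hdegAT : ∀ a : α, degA T a = 1 := by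
    intro a
    have : T.filter (fun e => e.1 = a) = {(a, (f a).1)} := by
      ext e
      constructor
      · intro he
        rw [mem_filter] at he
        obtain ⟨a', -, rfl⟩ := mem_image.mp he.1
        simp only [mem_singleton]
        have : a' = a := he.2
        subst this; rfl
      · intro he
        rw [mem_singleton] at he
        subst he
        exact mem_filter.mpr ⟨hTmem a, rfl⟩
    rw [degA, this, card_singleton]
  have hTsemi : IsSemi Finset.univ E T :=
    ⟨hTE, fun e _ => mem_univ _, fun a _ => hdegAT a⟩
  have hdegBT : ∀ b : β, degB T b ≤ k := by
    intro b
    rw [degB]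
    have hinj2 : ∀ e ∈ T.filter (fun e => e.2 = b), ∃ a, e = (a, (f a).1) ∧ (f a).1 = b := by
      intro e he
      rw [mem_filter] at he
      obtain ⟨a, -, rfl⟩ := mem_image.mp he.1
      exact ⟨a, rfl, he.2⟩
    -- map e to (f e.1).2 ∈ Fin k, injective
    have : (T.filter (fun e => e.2 = b)).card ≤ (Finset.univ : Finset (Fin k)).card := by
      apply card_le_card_of_injOn (fun e => (f e.1).2) (fun _ _ => mem_univ _)
      intro e1 h1 e2 h2 heq
      obtain ⟨a1, rfl, hb1⟩ := hinj2 e1 h1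
      obtain ⟨a2, rfl, hb2⟩ := hinj2 e2 h2
      have : f a1 = f a2 := by
        apply Prod.ext
        · rw [hb1, hb2]
        · exact heq
      rw [hfinj this]
    simpa using this
  have hTmax : maxDeg T ≤ k := by
    rw [maxDeg]
    apply max_le
    · apply Finset.sup_le
      intro a _
      rw [hdegAT a]; exact hk1
    · exact Finset.sup_le fun b _ => hdegBT b
  have hupper : maxDeg S ≤ k := le_trans (hS.2 T hTsemi) hTmax
  -- Lower bound: m ≤ N * maxDeg S
  obtain ⟨hSE, -, hSdeg⟩ := hS.1
  have hlower : m ≤ N * maxDeg S := by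
    set S' : Finset (α × β) := S.filter (fun e => e.1 ∈ A') with hS'
    have hcard1 : S'.card = m := by
      have : S' = A'.biUnion (fun a => S.filter (fun e => e.1 = a)) := by
        ext e
        simp only [hS', mem_filter, mem_biUnion]
        constructor
        · rintro ⟨he, ha⟩; exact ⟨e.1, ha, he, rfl⟩
        · rintro ⟨a, ha, he, rfl⟩; exact ⟨he, ha⟩
      rw [this, card_biUnion]
      · have : ∀ a ∈ A', (S.filter (fun e => e.1 = a)).card = 1 := fun a ha =>
          hSdeg a (mem_univ a)
        rw [Finset.sum_congr rfl this, Finset.sum_const, smul_eq_mul, mul_one]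
      · intro a _ a' _ hne
        simp only [disjoint_left, mem_filter]
        rintro e ⟨-, rfl⟩ ⟨-, h⟩
        exact hne h
    have hcard2 : S'.card ≤ N * maxDeg S := by
      have hsub : S' = (nbr E A').biUnion (fun b => S'.filter (fun e => e.2 = b)) := by
        ext e
        simp only [mem_biUnion, mem_filter]
        constructor
        · intro he
          refine ⟨e.2, ?_, he, rfl⟩
          rw [hS', mem_filter] at he
          simp only [nbr, mem_filter, mem_univ, true_and]
          exact ⟨e.1, he.2, by rw [← Prod.mk.eta (p := e)] at he; exact hSE he.1⟩
        · rintro ⟨b, -, he, rfl⟩; exact he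
      rw [hsub]
      calc ((nbr E A').biUnion (fun b => S'.filter (fun e => e.2 = b))).card
          ≤ ∑ b ∈ nbr E A', (S'.filter (fun e => e.2 = b)).card := card_biUnion_le
        _ ≤ ∑ b ∈ nbr E A', maxDeg S := by
            apply Finset.sum_le_sum
            intro b _
            calc (S'.filter (fun e => e.2 = b)).card
                ≤ (S.filter (fun e => e.2 = b)).card := by
                  apply card_le_card
                  exact filter_subset_filter _ (filter_subset _ _)
              _ = degB S b := rfl
              _ ≤ Finset.univ.sup (degB S) := Finset.le_sup (mem_univ b)
              _ ≤ maxDeg S := le_max_right _ _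
        _ = N * maxDeg S := by rw [Finset.sum_const, smul_eq_mul]
    omega
  -- combine
  have hlow2 : (⌈(m : ℚ) / N⌉ : ℤ) ≤ maxDeg S := by
    apply Int.ceil_le.mpr
    rw [div_le_iff₀ (by exact_mod_cast hNpos)]
    push_cast
    have : (m : ℚ) ≤ (N : ℚ) * (maxDeg S : ℚ) := by exact_mod_cast hlower
    linarith
  have hup2 : (maxDeg S : ℤ) ≤ ⌈(m : ℚ) / N⌉ := by
    rw [← hkk]
    exact_mod_cast hupper
  omega
end

section
/- Let G = (A, B, E) be a bipartite graph with |A| = n, let S be an optimal semi-matching of G (one admitting no degree-minimizing paths), and let A' ⊆ A. Then the maximal degree of an optimal semi-matching of A' into B using only edges of S is strictly less than √n · (d*)^(1/2) + 1, where d* is the maximal degree of an optimal semi-matching of A' into B using all edges of E. -/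
open Finset

variable {α β : Type*} [Fintype α] [Fintype β] [DecidableEq α] [DecidableEq β]

/-- A degree-minimizing path `(b 0, a 0, b 1, a 1, …, b k)` with respect to a
semi-matching `S` in the graph with edge set `E`: each `a i` is matched to `b i` in `S`,
each `(a i, b (i+1))` is a non-matching edge of `E`, the `S`-degrees of the `b i` are
non-increasing along the path, and the total degree drop is at least `2`. -/
def IsDegMinPath (E S : Finset (α × β)) {k : ℕ} (a : Fin k → α) (b : Fin (k + 1) → β) :
    Prop :=
  0 < k ∧ Function.Injective a ∧ Function.Injective b ∧
  (∀ i : Fin k, (a i, b i.castSucc) ∈ S) ∧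
  (∀ i : Fin k, (a i, b i.succ) ∈ E ∧ (a i, b i.succ) ∉ S) ∧
  (∀ i : Fin k, degB S (b i.succ) ≤ degB S (b i.castSucc)) ∧
  degB S (b (Fin.last k)) + 2 ≤ degB S (b 0)

/-- `S` admits no degree-minimizing path (of any length) in `E`. -/
def NoDegMinPath (E S : Finset (α × β)) : Prop :=
  ∀ (k : ℕ) (a : Fin k → α) (b : Fin (k + 1) → β), ¬ IsDegMinPath E S a b

/-- `S` admits no length-2 degree-minimizing path `(b', a, b)` in `E`, i.e. there is no
`a` matched in `S` to `b'` with a non-matching edge `(a, b) ∈ E` and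
`deg_S(b') > deg_S(b) + 1`. -/
def NoLen2DegMinPath (E S : Finset (α × β)) : Prop :=
  ¬ ∃ (a : α) (b b' : β), (a, b') ∈ S ∧ (a, b) ∈ E ∧ (a, b) ∉ S ∧
      degB S b + 1 < degB S b'

lemma sum_degB_eq (W : Finset (α × β)) (Y : Finset β) :
    ∑ b ∈ Y, degB W b = (W.filter fun e => e.2 ∈ Y).card := by
  have h0 : (W.filter fun e => e.2 ∈ Y).card
      = ∑ b ∈ Y, ((W.filter fun e => e.2 ∈ Y).filter fun e => e.2 = b).card :=
    Finset.card_eq_sum_card_fiberwise (fun e he => (Finset.mem_filter.mp he).2)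
  rw [h0]
  refine Finset.sum_congr rfl fun b hb => ?_
  unfold degB
  rw [Finset.filter_filter]
  congr 1
  apply Finset.filter_congr
  intro e _
  constructor
  · intro h; exact ⟨by rw [h]; exact hb, h⟩
  · exact fun h => h.2

lemma sum_degA_eq (W : Finset (α × β)) (X : Finset α) :
    ∑ a ∈ X, degA W a = (W.filter fun e => e.1 ∈ X).card := by
  have h0 : (W.filter fun e => e.1 ∈ X).card
      = ∑ a ∈ X, ((W.filter fun e => e.1 ∈ X).filter fun e => e.1 = a).card :=
    Finset.card_eq_sum_card_fiberwise (fun e he => (Finset.mem_filter.mp he).2)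
  rw [h0]
  refine Finset.sum_congr rfl fun a ha => ?_
  unfold degA
  rw [Finset.filter_filter]
  congr 1
  apply Finset.filter_congr
  intro e _
  constructor
  · intro h; exact ⟨by rw [h]; exact ha, h⟩
  · exact fun h => h.2

lemma card_of_semi (S : Finset (α × β)) (h : ∀ a : α, degA S a = 1) :
    S.card = Fintype.card α := by
  calc S.card = ∑ a : α, (S.filter fun e => e.1 = a).card :=
        Finset.card_eq_sum_card_fiberwise (f := fun e : α × β => e.1)
          (t := Finset.univ) (fun e _ => Finset.mem_univ _)
    _ = ∑ _a : α, 1 := Finset.sum_congr rfl fun a _ => h a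
    _ = Fintype.card α := by simp

lemma maxDeg_empty : maxDeg (∅ : Finset (α × β)) = 0 := by
  have h1 : Finset.univ.sup (degA (∅ : Finset (α × β))) ≤ 0 :=
    Finset.sup_le fun a _ => by simp [degA]
  have h2 : Finset.univ.sup (degB (∅ : Finset (α × β))) ≤ 0 :=
    Finset.sup_le fun b _ => by simp [degB]
  unfold maxDeg
  omega

lemma step_degB (E S : Finset (α × β)) (hno : NoDegMinPath E S)
    (hdeg : ∀ a : α, degA S a = 1) {a : α} {p b : β}
    (hp : (a, p) ∈ S) (hb : (a, b) ∈ E) : degB S p ≤ degB S b + 1 := by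
  by_cases hbS : (a, b) ∈ S
  · have hpb : p = b := by
      have h1 : (S.filter fun e => e.1 = a).card ≤ 1 := (hdeg a).le
      have hm1 : (a, p) ∈ S.filter fun e => e.1 = a := Finset.mem_filter.mpr ⟨hp, rfl⟩
      have hm2 : (a, b) ∈ S.filter fun e => e.1 = a := Finset.mem_filter.mpr ⟨hbS, rfl⟩
      have := Finset.card_le_one.mp h1 _ hm1 _ hm2
      exact congrArg Prod.snd this
    rw [hpb]
    omega
  · by_contra hlt
    push_neg at hlt
    have hpb : p ≠ b := fun h => by rw [h] at hlt; omega
    apply hno 1 (fun _ => a) ![p, b]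
    refine ⟨Nat.one_pos, fun i j _ => Subsingleton.elim i j, ?_, ?_, ?_, ?_, ?_⟩
    · intro i j hij
      fin_cases i <;> fin_cases j <;> simp_all
    · intro i
      have : i = 0 := Subsingleton.elim i 0
      subst this
      exact hp
    · intro i
      have : i = 0 := Subsingleton.elim i 0
      subst this
      exact ⟨hb, hbS⟩
    · intro i
      have : i = 0 := Subsingleton.elim i 0
      subst this
      show degB S b ≤ degB S p
      omega
    · show degB S b + 2 ≤ degB S p
      omega

set_option maxHeartbeats 800000 in
lemma exists_violator (A' : Finset α) (S T : Finset (α × β)) (hT : IsOptSemi A' S T)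
    {D : ℕ} (hD : 1 ≤ D) (hDlt : D < maxDeg T) :
    ∃ X, X ⊆ A' ∧ D * (nbr S X).card < X.card := by
  by_contra hcon
  push_neg at hcon
  have hall : ∀ s : Finset {x // x ∈ A'},
      s.card ≤ (s.biUnion fun a =>
        (Finset.univ.filter fun b => (a.1, b) ∈ S) ×ˢ (Finset.univ : Finset (Fin D))).card := by
    intro s
    have himg : (s.biUnion fun a =>
        (Finset.univ.filter fun b => (a.1, b) ∈ S) ×ˢ (Finset.univ : Finset (Fin D)))
        = (nbr S (s.image Subtype.val)) ×ˢ (Finset.univ : Finset (Fin D)) := by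
      ext e
      simp only [Finset.mem_biUnion, Finset.mem_product, Finset.mem_filter, Finset.mem_univ,
        true_and, and_true, nbr, Finset.mem_image]
      constructor
      · rintro ⟨a, has, hab⟩
        exact ⟨a.1, ⟨a, has, rfl⟩, hab⟩
      · rintro ⟨x, ⟨a, has, rfl⟩, hab⟩
        exact ⟨a, has, hab⟩
    rw [himg, Finset.card_product, Finset.card_univ, Fintype.card_fin]
    have hXA : (s.image Subtype.val) ⊆ A' := by
      intro x hx
      obtain ⟨a, _, rfl⟩ := Finset.mem_image.mp hx
      exact a.2
    have h1 := hcon (s.image Subtype.val) hXA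
    have hcardim : (s.image Subtype.val).card = s.card :=
      Finset.card_image_of_injective s Subtype.val_injective
    rw [mul_comm, ← hcardim]
    exact h1
  obtain ⟨f, hfinj, hf⟩ := (Finset.all_card_le_biUnion_card_iff_exists_injective _).mp hall
  have hfS : ∀ a : {x // x ∈ A'}, (a.1, (f a).1) ∈ S := fun a =>
    (Finset.mem_filter.mp (Finset.mem_product.mp (hf a)).1).2
  set T' : Finset (α × β) := A'.attach.image fun a => (a.1, (f a).1) with hT'def
  have hT'sub : T' ⊆ S := by
    intro e he
    obtain ⟨a, _, rfl⟩ := Finset.mem_image.mp he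
    exact hfS a
  have hT'fst : ∀ e ∈ T', e.1 ∈ A' := by
    intro e he
    obtain ⟨a, _, rfl⟩ := Finset.mem_image.mp he
    exact a.2
  have hT'deg : ∀ a ∈ A', degA T' a = 1 := by
    intro a ha
    have hfe : T'.filter (fun e => e.1 = a) = {(a, (f ⟨a, ha⟩).1)} := by
      ext e
      simp only [Finset.mem_filter, Finset.mem_singleton, hT'def, Finset.mem_image]
      constructor
      · rintro ⟨⟨x, hx, rfl⟩, h1⟩
        have hxa : x = ⟨a, ha⟩ := Subtype.ext h1
        rw [hxa]
      · rintro rfl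
        exact ⟨⟨⟨a, ha⟩, Finset.mem_attach _ _, rfl⟩, rfl⟩
    unfold degA
    rw [hfe, Finset.card_singleton]
  have hT'semi : IsSemi A' S T' := ⟨hT'sub, hT'fst, hT'deg⟩
  have hdegB : ∀ b', degB T' b' ≤ D := by
    intro b'
    have hsub : T'.filter (fun e => e.2 = b') ⊆
        (A'.attach.filter fun a => (f a).1 = b').image (fun a => (a.1, (f a).1)) := by
      intro e he
      obtain ⟨heT, he2⟩ := Finset.mem_filter.mp he
      obtain ⟨x, hx, rfl⟩ := Finset.mem_image.mp heT
      exact Finset.mem_image.mpr ⟨x, Finset.mem_filter.mpr ⟨hx, he2⟩, rfl⟩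
    have hinj : Set.InjOn (fun a : {x // x ∈ A'} => (f a).2)
        (A'.attach.filter fun a => (f a).1 = b') := by
      intro x hx y hy hxy
      have hx1 := (Finset.mem_filter.mp hx).2
      have hy1 := (Finset.mem_filter.mp hy).2
      exact hfinj (Prod.ext (hx1.trans hy1.symm) hxy)
    calc degB T' b' ≤ ((A'.attach.filter fun a => (f a).1 = b').image
          (fun a => (a.1, (f a).1))).card := Finset.card_le_card hsub
      _ ≤ (A'.attach.filter fun a => (f a).1 = b').card := Finset.card_image_le
      _ ≤ (Finset.univ : Finset (Fin D)).card :=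
          Finset.card_le_card_of_injOn (fun a => (f a).2) (fun a _ => Finset.mem_univ _) hinj
      _ = D := by rw [Finset.card_univ, Fintype.card_fin]
  have hdegA : ∀ a, degA T' a ≤ 1 := by
    intro a
    by_cases ha : a ∈ A'
    · exact (hT'deg a ha).le
    · have he : T'.filter (fun e => e.1 = a) = ∅ :=
        Finset.filter_eq_empty_iff.mpr fun e he h1 => ha (h1 ▸ hT'fst e he)
      unfold degA
      rw [he]
      simp
  have hmax : maxDeg T' ≤ D := by
    unfold maxDeg
    apply max_le
    · exact Finset.sup_le fun a _ => (hdegA a).trans hD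
    · exact Finset.sup_le fun b' _ => hdegB b'
  have := hT.2 T' hT'semi
  omega


set_option maxHeartbeats 1000000 in
/-- An optimal semi-matching `S` of `G = (A,B,E)` is an `O(√n)`-skeleton: for any
`A' ⊆ A`, the optimal semi-matching degree of `A'` into `B` using only edges of `S` is
less than `√n · √(d*) + 1`, where `d*` is the optimal semi-matching degree of `A'` in `E`. -/
theorem optSemi_skeleton_sqrt (E S : Finset (α × β)) (n : ℕ) (hn : n = Fintype.card α)
    (hS : IsSemi Finset.univ E S) (hno : NoDegMinPath E S)
    (A' : Finset α) (T S' : Finset (α × β))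
    (hT : IsOptSemi A' S T) (hS' : IsOptSemi A' E S') :
    (maxDeg T : ℝ) < Real.sqrt n * Real.sqrt (maxDeg S') + 1 := by
  have hsqnn : (0:ℝ) ≤ Real.sqrt n * Real.sqrt (maxDeg S') :=
    mul_nonneg (Real.sqrt_nonneg _) (Real.sqrt_nonneg _)
  rcases Finset.eq_empty_or_nonempty A' with hA' | hA'
  · -- A' empty : T = ∅
    have hT0 : T = ∅ := Finset.eq_empty_of_forall_notMem fun e he => by
      have := hT.1.2.1 e he
      rw [hA'] at this
      exact absurd this (Finset.notMem_empty _)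
    rw [hT0, maxDeg_empty]
    push_cast
    linarith
  · obtain ⟨a₀, ha₀⟩ := hA'
    have hd'1 : 1 ≤ maxDeg S' := by
      have h1 : degA S' a₀ = 1 := hS'.1.2.2 a₀ ha₀
      have h2 : degA S' a₀ ≤ Finset.univ.sup (degA S') := Finset.le_sup (Finset.mem_univ a₀)
      have h3 : Finset.univ.sup (degA S') ≤ maxDeg S' := le_max_left _ _
      omega
    have hn1 : 1 ≤ n := by
      rw [hn]
      exact Fintype.card_pos_iff.mpr ⟨a₀⟩
    have hsq1 : (1:ℝ) ≤ Real.sqrt n * Real.sqrt (maxDeg S') := by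
      have h1 : (1:ℝ) ≤ Real.sqrt n := by
        rw [show (1:ℝ) = Real.sqrt 1 by simp]
        exact Real.sqrt_le_sqrt (by exact_mod_cast hn1)
      have h2 : (1:ℝ) ≤ Real.sqrt (maxDeg S') := by
        rw [show (1:ℝ) = Real.sqrt 1 by simp]
        exact Real.sqrt_le_sqrt (by exact_mod_cast hd'1)
      nlinarith
    rcases le_or_gt (maxDeg T) 1 with hd1 | hd2
    · have : (maxDeg T : ℝ) ≤ 1 := by exact_mod_cast hd1
      linarith
    · -- main case
      set d := maxDeg T with hd
      set D := d - 1 with hD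
      have hD1 : 1 ≤ D := by omega
      have hDlt : D < maxDeg T := by omega
      obtain ⟨X, hXA', hX⟩ := exists_violator A' S T hT hD1 hDlt
      -- degrees in S
      have hdeg : ∀ a : α, degA S a = 1 := fun a => hS.2.2 a (Finset.mem_univ a)
      -- partner function
      have hβ : Nonempty β := by
        have h1 : 0 < degA S a₀ := by have := hdeg a₀; omega
        have h2 : (S.filter fun e => e.1 = a₀).Nonempty := Finset.card_pos.mp h1
        exact ⟨h2.choose.2⟩
    -- continue
      obtain ⟨b₀⟩ := hβ
      set f : α → β := fun a =>
        if h : (S.filter fun e => e.1 = a).Nonempty then h.choose.2 else b₀ with hfdef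
      have hfS : ∀ a, (a, f a) ∈ S := by
        intro a
        have hne : (S.filter fun e => e.1 = a).Nonempty := Finset.card_pos.mp (by
          have := hdeg a
          unfold degA at this
          omega)
        have hch := hne.choose_spec
        rw [Finset.mem_filter] at hch
        have hfa : f a = hne.choose.2 := by rw [hfdef]; exact dif_pos hne
        rw [hfa]
        have h4 : ((Exists.choose hne).1, (Exists.choose hne).2) ∈ S := by
          rw [Prod.mk.eta]; exact hch.1
        have h5 : ((Exists.choose hne).1, (Exists.choose hne).2) = (a, hne.choose.2) :=
          congrArg (fun x => (x, hne.choose.2)) hch.2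
        rw [← h5]
        exact h4
      have hfU : ∀ a b', (a, b') ∈ S → b' = f a := by
        intro a b' hab'
        have h1 : (S.filter fun e => e.1 = a).card ≤ 1 := (hdeg a).le
        have hm1 : (a, b') ∈ S.filter fun e => e.1 = a := Finset.mem_filter.mpr ⟨hab', rfl⟩
        have hm2 : (a, f a) ∈ S.filter fun e => e.1 = a := Finset.mem_filter.mpr ⟨hfS a, rfl⟩
        exact congrArg Prod.snd (Finset.card_le_one.mp h1 _ hm1 _ hm2)
      -- pigeonhole
      have hfP : ∀ a ∈ X, f a ∈ nbr S X := fun a ha =>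
        Finset.mem_filter.mpr ⟨Finset.mem_univ _, a, ha, hfS a⟩
      have hsum : X.card = ∑ p ∈ nbr S X, (X.filter fun a => f a = p).card :=
        Finset.card_eq_sum_card_fiberwise hfP
      obtain ⟨p, hpP, hp⟩ : ∃ p ∈ nbr S X, D + 1 ≤ (X.filter fun a => f a = p).card := by
        by_contra hc
        push_neg at hc
        have h1 : X.card ≤ D * (nbr S X).card := by
          rw [hsum]
          calc ∑ p ∈ nbr S X, (X.filter fun a => f a = p).card
              ≤ ∑ _p ∈ nbr S X, D :=
                Finset.sum_le_sum fun p hpp => by have := hc p hpp; omega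
            _ = (nbr S X).card * D := by rw [Finset.sum_const, smul_eq_mul]
            _ = D * (nbr S X).card := mul_comm _ _
        exact absurd hX (not_lt.mpr h1)
      set Xp := X.filter fun a => f a = p with hXpdef
      have hXpS : ∀ a ∈ Xp, (a, p) ∈ S := by
        intro a ha
        have h2 := (Finset.mem_filter.mp ha).2
        rw [← h2]
        exact hfS a
      have hXpA' : Xp ⊆ A' := (Finset.filter_subset _ _).trans hXA'
      have hdegp : D + 1 ≤ degB S p := by
        refine le_trans hp (Finset.card_le_card_of_injOn (fun a => (a, p)) ?_ ?_)
        · exact fun a ha => Finset.mem_filter.mpr ⟨hXpS a ha, rfl⟩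
        · exact fun a _ a' _ h => congrArg Prod.fst h
      -- all E-neighbors of Xp have degree ≥ D
      have hYdeg : ∀ b' ∈ nbr E Xp, D ≤ degB S b' := by
        intro b' hb'
        obtain ⟨a, ha, haE⟩ := (Finset.mem_filter.mp hb').2
        have := step_degB E S hno hdeg (hXpS a ha) haE
        omega
      -- counting
      have hScard : S.card = n := by rw [hn]; exact card_of_semi S hdeg
      have hDn : D * (nbr E Xp).card ≤ n := by
        calc D * (nbr E Xp).card = ∑ _b ∈ nbr E Xp, D := by
              rw [Finset.sum_const, smul_eq_mul, mul_comm]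
          _ ≤ ∑ b ∈ nbr E Xp, degB S b := Finset.sum_le_sum hYdeg
          _ = (S.filter fun e => e.2 ∈ nbr E Xp).card := sum_degB_eq S (nbr E Xp)
          _ ≤ S.card := Finset.card_le_card (Finset.filter_subset _ _)
          _ = n := hScard
      have hXpd : Xp.card ≤ maxDeg S' * (nbr E Xp).card := by
        have h1 : Xp.card = ∑ a ∈ Xp, degA S' a := by
          rw [Finset.sum_congr rfl fun a ha => hS'.1.2.2 a (hXpA' ha)]
          simp
        have h3 : (S'.filter fun e => e.1 ∈ Xp) ⊆ (S'.filter fun e => e.2 ∈ nbr E Xp) := by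
          intro e he
          obtain ⟨heS', he1⟩ := Finset.mem_filter.mp he
          refine Finset.mem_filter.mpr ⟨heS', Finset.mem_filter.mpr
            ⟨Finset.mem_univ _, e.1, he1, ?_⟩⟩
          exact hS'.1.1 heS'
        have h5 : ∀ b' ∈ nbr E Xp, degB S' b' ≤ maxDeg S' := fun b' _ =>
          le_trans (Finset.le_sup (Finset.mem_univ b')) (le_max_right _ _)
        calc Xp.card = ∑ a ∈ Xp, degA S' a := h1
          _ = (S'.filter fun e => e.1 ∈ Xp).card := sum_degA_eq S' Xp
          _ ≤ (S'.filter fun e => e.2 ∈ nbr E Xp).card := Finset.card_le_card h3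
          _ = ∑ b ∈ nbr E Xp, degB S' b := (sum_degB_eq S' (nbr E Xp)).symm
          _ ≤ ∑ _b ∈ nbr E Xp, maxDeg S' := Finset.sum_le_sum h5
          _ = (nbr E Xp).card * maxDeg S' := by rw [Finset.sum_const, smul_eq_mul]
          _ = maxDeg S' * (nbr E Xp).card := mul_comm _ _
      have hkey : D * D < n * maxDeg S' := by
        have h1 : D + 1 ≤ Xp.card := hp
        nlinarith [hDn, hXpd]
      -- real arithmetic
      have hDr : (D:ℝ) < Real.sqrt n * Real.sqrt (maxDeg S') := by
        rw [← Real.sqrt_mul (by positivity) ((maxDeg S' : ℕ) : ℝ)]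
        rw [show ((n:ℝ) * ((maxDeg S' : ℕ):ℝ)) = (((n * maxDeg S' : ℕ)):ℝ) by push_cast; ring]
        rw [Real.lt_sqrt (by positivity)]
        have : ((D:ℕ):ℝ) ^ 2 = (((D * D : ℕ)):ℝ) := by push_cast; ring
        rw [this]
        exact_mod_cast hkey
      have hdD : (maxDeg T : ℝ) = (D:ℝ) + 1 := by
        have : d = D + 1 := by omega
        rw [← hd, this]
        push_cast
        ring
      rw [hdD]
      linarith
end

section
/- Let G = (A, B, E) be a bipartite graph, A'' ⊆ A' ⊆ A, and let S be an optimal semi-matching of A' into B. Write Γ_S(A') = {b_1, ..., b_k}, A'_i = Γ_S(b_i) ∩ A', A''_i = Γ_S(b_i) ∩ A'', and let d be the maximal degree of an optimal semi-matching of A'' into B using edges of E. Then (1/d) · Σ_{i : b_i ∈ Γ_S(A'')} |A''_i| · (|A'_i| − 1) ≤ |A'|. -/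
open Finset

variable {α β : Type*} [Fintype α] [Fintype β] [DecidableEq α] [DecidableEq β]

lemma no2_of_noDegMinPath (E S : Finset (α × β)) (hno : NoDegMinPath E S) :
    NoLen2DegMinPath E S := by
  rintro ⟨a, b, b', h1, h2, h3, h4⟩
  have hne : b' ≠ b := by
    intro h; rw [h] at h4; omega
  apply hno 1 (fun _ => a) ![b', b]
  refine ⟨one_pos, fun i j _ => Subsingleton.elim i j, ?_, ?_, ?_, ?_, ?_⟩
  · intro i j hij
    fin_cases i <;> fin_cases j <;> simp_all
  · intro i
    fin_cases i
    simpa using h1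
  · intro i
    fin_cases i
    simpa using ⟨h2, h3⟩
  · intro i
    fin_cases i
    simp only [Matrix.cons_val_zero, Matrix.cons_val_one]
    show degB S b ≤ degB S b'
    omega
  · show degB S b + 2 ≤ degB S b'
    omega


/-- Counting lemma for optimal semi-matchings: with `S` an optimal semi-matching of `A'`
into `B`, `A'_b = Γ_S(b) ∩ A'`, `A''_b = Γ_S(b) ∩ A''` and `d` the optimal semi-matching
degree of `A'' ⊆ A'`, we have `(1/d) · Σ_{b ∈ Γ_S(A'')} |A''_b|(|A'_b| − 1) ≤ |A'|`. -/
theorem semi_counting_inequality (E S : Finset (α × β)) (A' A'' : Finset α)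
    (hsub : A'' ⊆ A') (hS : IsSemi A' E S) (hno : NoDegMinPath E S)
    (S'' : Finset (α × β)) (hS'' : IsOptSemi A'' E S'') (d : ℕ) (hd : d = maxDeg S'') :
    (∑ b ∈ nbr S A'', ((A''.filter fun a => (a, b) ∈ S).card : ℝ) *
        (((A'.filter fun a => (a, b) ∈ S).card : ℝ) - 1)) / (d : ℝ) ≤ (A'.card : ℝ) := by
  classical
  obtain ⟨hSE, hSA, hdegA⟩ := hS
  obtain ⟨⟨hS''E, hS''A, hdeg''⟩, -⟩ := hS''
  have no2 := no2_of_noDegMinPath E S hno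
  set T : Finset (α × β) := S.filter (fun e => e.1 ∈ A'') with hT
  -- |A'_b| = degB S b
  have hA'b : ∀ b : β, (A'.filter fun a => (a, b) ∈ S).card = degB S b := by
    intro b
    unfold degB
    apply Finset.card_bij (fun a _ => (a, b))
    · intro a ha
      simp only [mem_filter] at ha ⊢
      refine ⟨ha.2, ?_⟩; trivial
    · intro a1 h1 a2 h2 h; simpa using h
    · intro e he
      simp only [mem_filter] at he
      exact ⟨e.1, by simp only [mem_filter]; exact ⟨hSA e he.1, by rw [← he.2]; exact he.1⟩,
        by rw [← he.2]⟩
  have hA''b : ∀ b : β, (A''.filter fun a => (a, b) ∈ S).card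
      = (T.filter fun e => e.2 = b).card := by
    intro b
    apply Finset.card_bij (fun a _ => (a, b))
    · intro a ha
      simp only [hT, mem_filter] at ha ⊢
      refine ⟨⟨ha.2, ha.1⟩, ?_⟩; trivial
    · intro a1 h1 a2 h2 h; simpa using h
    · intro e he
      simp only [hT, mem_filter] at he
      exact ⟨e.1, by simp only [mem_filter]; exact ⟨he.1.2, by rw [← he.2]; exact he.1.1⟩,
        by rw [← he.2]⟩
  -- the natural-number sum
  set N : ℕ := ∑ b ∈ nbr S A'',
      (A''.filter fun a => (a, b) ∈ S).card * ((A'.filter fun a => (a, b) ∈ S).card - 1)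
    with hN
  have key : N ≤ d * A'.card := by
    have step0 : N = ∑ b : β, (T.filter fun e => e.2 = b).card * (degB S b - 1) := by
      rw [hN]
      rw [Finset.sum_subset (Finset.subset_univ _)]
      · exact Finset.sum_congr rfl fun b _ => by rw [hA'b, hA''b]
      · intro b _ hb
        have : (A''.filter fun a => (a, b) ∈ S) = ∅ := by
          rw [Finset.filter_eq_empty_iff]
          intro a ha hab
          exact hb (by simp only [nbr, mem_filter, mem_univ, true_and]; exact ⟨a, ha, hab⟩)
        rw [hA'b, hA''b, ← hA''b, this]
        simp
    have step1 : (∑ b : β, (T.filter fun e => e.2 = b).card * (degB S b - 1))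
        = ∑ e ∈ T, (degB S e.2 - 1) := by
      rw [← Finset.sum_fiberwise T (fun e => e.2) (fun e => degB S e.2 - 1)]
      refine Finset.sum_congr rfl fun b _ => ?_
      rw [Finset.sum_congr rfl (g := fun _ => degB S b - 1)
        (fun e he => by rw [(mem_filter.mp he).2])]
      simp [mul_comm]
    -- fiber singletons
    have hfibS : ∀ a ∈ A', ∃ b : β, S.filter (fun e => e.1 = a) = {(a, b)} := by
      intro a ha
      obtain ⟨e, he⟩ := Finset.card_eq_one.mp (hdegA a ha)
      have hmem : e ∈ S.filter (fun e => e.1 = a) := he ▸ Finset.mem_singleton_self e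
      simp only [mem_filter] at hmem
      exact ⟨e.2, by rw [he, ← hmem.2]⟩
    have hfibS'' : ∀ a ∈ A'', ∃ b : β, S''.filter (fun e => e.1 = a) = {(a, b)} := by
      intro a ha
      obtain ⟨e, he⟩ := Finset.card_eq_one.mp (hdeg'' a ha)
      have hmem : e ∈ S''.filter (fun e => e.1 = a) := he ▸ Finset.mem_singleton_self e
      simp only [mem_filter] at hmem
      exact ⟨e.2, by rw [he, ← hmem.2]⟩
    have step2 : (∑ e ∈ T, (degB S e.2 - 1)) ≤ ∑ e ∈ S'', degB S e.2 := by
      rw [← Finset.sum_fiberwise T (fun e => e.1) (fun e => degB S e.2 - 1),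
          ← Finset.sum_fiberwise S'' (fun e => e.1) (fun e => degB S e.2)]
      apply Finset.sum_le_sum
      intro a _
      by_cases ha : a ∈ A''
      · obtain ⟨b, hb⟩ := hfibS a (hsub ha)
        obtain ⟨b'', hb''⟩ := hfibS'' a ha
        have hTfib : T.filter (fun e => e.1 = a) = {(a, b)} := by
          rw [hT, Finset.filter_filter, ← hb]
          apply Finset.filter_congr
          intro e _
          constructor
          · exact fun h => h.2
          · exact fun h => ⟨h ▸ ha, h⟩
        rw [hTfib, hb'', Finset.sum_singleton, Finset.sum_singleton]
        show degB S b - 1 ≤ degB S b''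
        have habS : (a, b) ∈ S := by
          have := hb ▸ Finset.mem_singleton_self (a, b)
          exact (mem_filter.mp this).1
        have hab''S'' : (a, b'') ∈ S'' := by
          have := hb'' ▸ Finset.mem_singleton_self (a, b'')
          exact (mem_filter.mp this).1
        by_cases hcase : (a, b'') ∈ S
        · have : (a, b'') ∈ S.filter (fun e => e.1 = a) := mem_filter.mpr ⟨hcase, rfl⟩
          rw [hb, Finset.mem_singleton] at this
          have : b'' = b := congrArg Prod.snd this
          rw [this]
          omega
        · have : ¬ (degB S b'' + 1 < degB S b) := by
            intro hlt
            exact no2 ⟨a, b'', b, habS, hS''E hab''S'', hcase, hlt⟩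
          omega
      · have h1 : T.filter (fun e => e.1 = a) = ∅ := by
          rw [Finset.filter_eq_empty_iff]
          intro e he h
          exact ha (h ▸ (mem_filter.mp he).2)
        have h2 : S''.filter (fun e => e.1 = a) = ∅ := by
          rw [Finset.filter_eq_empty_iff]
          intro e he h
          exact ha (h ▸ hS''A e he)
        simp [h1, h2]
    have hScard : S.card = A'.card := by
      rw [Finset.card_eq_sum_card_fiberwise (fun e he => hSA e he)]
      rw [Finset.sum_congr rfl (fun a ha =>
        show (S.filter fun e => e.1 = a).card = 1 from hdegA a ha)]
      simp
    have step3 : (∑ e ∈ S'', degB S e.2) ≤ d * A'.card := by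
      rw [← Finset.sum_fiberwise S'' (fun e => e.2) (fun e => degB S e.2)]
      have : ∀ b : β, (∑ e ∈ S''.filter (fun e => e.2 = b), degB S e.2)
          ≤ d * degB S b := by
        intro b
        rw [Finset.sum_congr rfl (g := fun _ => degB S b)
          (fun e he => by rw [(mem_filter.mp he).2])]
        rw [Finset.sum_const, smul_eq_mul]
        apply Nat.mul_le_mul_right
        calc (S''.filter fun e => e.2 = b).card = degB S'' b := rfl
          _ ≤ Finset.univ.sup (degB S'') := Finset.le_sup (Finset.mem_univ b)
          _ ≤ d := by rw [hd]; exact le_max_right _ _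
      calc (∑ b : β, ∑ e ∈ S''.filter (fun e => e.2 = b), degB S e.2)
          ≤ ∑ b : β, d * degB S b := Finset.sum_le_sum fun b _ => this b
        _ = d * ∑ b : β, degB S b := by rw [Finset.mul_sum]
        _ = d * S.card := by
            congr 1
            rw [Finset.card_eq_sum_card_fiberwise (fun e _ => Finset.mem_univ e.2)]
            rfl
        _ = d * A'.card := by rw [hScard]
    calc N = ∑ e ∈ T, (degB S e.2 - 1) := by rw [step0, step1]
      _ ≤ ∑ e ∈ S'', degB S e.2 := step2
      _ ≤ d * A'.card := step3
  -- cast to ℝ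
  have hcast : (∑ b ∈ nbr S A'', ((A''.filter fun a => (a, b) ∈ S).card : ℝ) *
      (((A'.filter fun a => (a, b) ∈ S).card : ℝ) - 1)) = (N : ℝ) := by
    rw [hN, Nat.cast_sum]
    refine Finset.sum_congr rfl fun b hb => ?_
    have h1 : 1 ≤ (A'.filter fun a => (a, b) ∈ S).card := by
      simp only [nbr, mem_filter, mem_univ, true_and] at hb
      obtain ⟨a, ha, hab⟩ := hb
      exact Finset.card_pos.mpr ⟨a, mem_filter.mpr ⟨hsub ha, hab⟩⟩
    rw [Nat.cast_mul, Nat.cast_sub h1]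
    push_cast
    ring
  rw [hcast]
  rcases Nat.eq_zero_or_pos d with hd0 | hd0
  · rw [hd0]
    simp
  · rw [div_le_iff₀ (by exact_mod_cast hd0)]
    calc (N : ℝ) ≤ ((d * A'.card : ℕ) : ℝ) := by exact_mod_cast key
      _ = (A'.card : ℝ) * d := by push_cast; ring
end

section
/- Let S be a semi-matching in a bipartite graph G = (A, B, E) admitting no length-2 degree-minimizing path, and let d be the maximal degree of S. Then S can be partitioned into matchings M_1, ..., M_d such that each M_i is a maximal matching in the induced subgraph G restricted to A_i × B_i, where A_1 = A, B_1 = B, and for i > 1, A_i = A \ (A(M_1) ∪ ... ∪ A(M_{i-1})) and B_i = B(M_{i-1}). -/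
open Finset

variable {α β : Type*} [Fintype α] [Fintype β] [DecidableEq α] [DecidableEq β]

/-- `M` is a matching: no two distinct edges share an endpoint. -/
def IsMatching (M : Finset (α × β)) : Prop :=
  ∀ e ∈ M, ∀ e' ∈ M, e ≠ e' → e.1 ≠ e'.1 ∧ e.2 ≠ e'.2

/-- `M` is a maximal matching in the graph with edge set `H`. -/
def IsMaximalMatchingIn (H M : Finset (α × β)) : Prop :=
  M ⊆ H ∧ IsMatching M ∧ ∀ e ∈ H, e ∉ M → ¬ IsMatching (insert e M)

/-- `M` is a maximum matching in the graph with edge set `H`. -/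
def IsMaximumMatchingIn (H M : Finset (α × β)) : Prop :=
  M ⊆ H ∧ IsMatching M ∧ ∀ M' ⊆ H, IsMatching M' → M'.card ≤ M.card

/-- A semi-matching `S` with no length-2 degree-minimizing path and maximal degree `d`
can be partitioned into matchings `M 0, …, M (d-1)` such that each `M i` is a maximal
matching in `G` restricted to `A_i × B_i`, where `A_0 = A`, `B_0 = B`, and for `i > 0`,
`A_i = A \ (A(M 0) ∪ ⋯ ∪ A(M (i-1)))` and `B_i = B(M (i-1))`. -/
theorem semi_decomposition_maximal_matchings (E S : Finset (α × β))
    (hS : IsSemi Finset.univ E S) (hno : NoLen2DegMinPath E S)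
    (d : ℕ) (hd : d = maxDeg S) :
    ∃ M : ℕ → Finset (α × β),
      (∀ i < d, ∀ j < d, i ≠ j → Disjoint (M i) (M j)) ∧
      (Finset.range d).biUnion M = S ∧
      ∀ i < d, IsMaximalMatchingIn
        (E.filter fun e =>
          e.1 ∈ Finset.univ \ ((Finset.range i).biUnion fun j => (M j).image Prod.fst) ∧
          e.2 ∈ (if i = 0 then Finset.univ else (M (i - 1)).image Prod.snd))
        (M i) := by
  classical
  obtain ⟨hSE, -, hdegA⟩ := hS
  set f : α × β → ℕ := fun e => ((Fintype.equivFin (α × β)) e : ℕ) with hfdef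
  have hfinj : Function.Injective f := fun x y h =>
    (Fintype.equivFin (α × β)).injective (Fin.val_injective h)
  set idx : α × β → ℕ := fun e => (S.filter fun e' => e'.2 = e.2 ∧ f e' < f e).card with hidx
  have huniq : ∀ e ∈ S, ∀ e' ∈ S, e.1 = e'.1 → e = e' := by
    intro e he e' he' h1
    have h := hdegA e.1 (mem_univ _)
    unfold degA at h
    exact Finset.card_le_one.mp (le_of_eq h) e (mem_filter.mpr ⟨he, rfl⟩)
      e' (mem_filter.mpr ⟨he', h1.symm⟩)
  have hAlt : ∀ e ∈ S, idx e < degB S e.2 := by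
    intro e he
    have hsub : (S.filter fun e' => e'.2 = e.2 ∧ f e' < f e) ⊆ S.filter fun e' => e'.2 = e.2 := by
      intro x hx; rw [mem_filter] at hx ⊢; exact ⟨hx.1, hx.2.1⟩
    have hss : (S.filter fun e' => e'.2 = e.2 ∧ f e' < f e) ⊂ S.filter fun e' => e'.2 = e.2 := by
      refine (Finset.ssubset_iff_of_subset hsub).mpr ⟨e, mem_filter.mpr ⟨he, rfl⟩, ?_⟩
      simp
    simpa [degB, hidx] using Finset.card_lt_card hss
  have hmono : ∀ e ∈ S, ∀ e', e.2 = e'.2 → f e < f e' → idx e < idx e' := by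
    intro e he e' h2 hlt
    apply Finset.card_lt_card
    refine (Finset.ssubset_iff_of_subset ?_).mpr ⟨e, mem_filter.mpr ⟨he, h2, hlt⟩, ?_⟩
    · intro x hx; rw [mem_filter] at hx ⊢
      exact ⟨hx.1, hx.2.1.trans h2, hx.2.2.trans hlt⟩
    · simp
  have hBinj : ∀ e ∈ S, ∀ e' ∈ S, e.2 = e'.2 → idx e = idx e' → e = e' := by
    intro e he e' he' h2 hii
    by_contra hne
    rcases lt_trichotomy (f e) (f e') with h | h | h
    · exact absurd hii (Nat.ne_of_lt (hmono e he e' h2 h))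
    · exact hne (hfinj h)
    · exact absurd hii.symm (Nat.ne_of_lt (hmono e' he' e h2.symm h))
  have hsurj : ∀ b : β, ∀ j < degB S b, ∃ e ∈ S, e.2 = b ∧ idx e = j := by
    intro b j hj
    set T := S.filter fun e => e.2 = b with hT
    have hinj : Set.InjOn idx ↑T := by
      intro x hx y hy hxy
      rw [mem_coe, hT, mem_filter] at hx hy
      exact hBinj x hx.1 y hy.1 (hx.2.trans hy.2.symm) hxy
    have himg : T.image idx ⊆ Finset.range (degB S b) := by
      intro j' hj'
      rw [mem_image] at hj'
      obtain ⟨x, hx, rfl⟩ := hj'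
      rw [mem_range]
      rw [hT, mem_filter] at hx
      have h := hAlt x hx.1
      rwa [hx.2] at h
    have hcard : (Finset.range (degB S b)).card ≤ (T.image idx).card := by
      rw [Finset.card_image_of_injOn hinj, Finset.card_range]
      rfl
    have heq : T.image idx = Finset.range (degB S b) :=
      Finset.eq_of_subset_of_card_le himg hcard
    have hmem : j ∈ T.image idx := heq ▸ mem_range.mpr hj
    rw [mem_image] at hmem
    obtain ⟨e, heT, hej⟩ := hmem
    rw [hT, mem_filter] at heT
    exact ⟨e, heT.1, heT.2, hej⟩
  have hdle : ∀ b, degB S b ≤ d := by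
    intro b
    rw [hd]
    exact le_trans (Finset.le_sup (mem_univ b)) (le_max_right _ _)
  refine ⟨fun i => S.filter fun e => idx e = i, ?_, ?_, ?_⟩
  · intro i _ j _ hij
    rw [Finset.disjoint_left]
    intro e hei hej
    rw [mem_filter] at hei hej
    exact hij (hei.2.symm.trans hej.2)
  · ext e
    simp only [mem_biUnion, mem_range, mem_filter]
    constructor
    · rintro ⟨i, -, heS, -⟩; exact heS
    · intro he
      exact ⟨idx e, lt_of_lt_of_le (hAlt e he) (hdle e.2), he, rfl⟩
  · intro i hi
    refine ⟨?_, ?_, ?_⟩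
    · intro e he
      rw [mem_filter] at he
      obtain ⟨heS, hei⟩ := he
      rw [mem_filter]
      refine ⟨hSE heS, ?_, ?_⟩
      · rw [mem_sdiff]
        refine ⟨mem_univ _, ?_⟩
        rw [mem_biUnion]
        rintro ⟨j, hj, hmem⟩
        rw [mem_range] at hj
        rw [mem_image] at hmem
        obtain ⟨e', he', h1⟩ := hmem
        rw [mem_filter] at he'
        have heq := huniq e' he'.1 e heS h1
        subst heq
        have h2 := he'.2
        omega
      · by_cases h0 : i = 0
        · simp [h0]
        · rw [if_neg h0]
          have hlt : i < degB S e.2 := by rw [← hei]; exact hAlt e heS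
          obtain ⟨e'', he''S, h2, hidx''⟩ := hsurj e.2 (i - 1) (by omega)
          rw [mem_image]
          exact ⟨e'', mem_filter.mpr ⟨he''S, hidx''⟩, h2⟩
    · intro e he e' he' hne
      rw [mem_filter] at he he'
      constructor
      · intro h1; exact hne (huniq e he.1 e' he'.1 h1)
      · intro h2; exact hne (hBinj e he.1 e' he'.1 h2 (he.2.trans he'.2.symm))
    · intro e heH heM hmat
      rw [mem_filter] at heH
      obtain ⟨heE, ha, hb⟩ := heH
      have hne0 : (S.filter fun e' => e'.1 = e.1).Nonempty := by
        rw [← Finset.card_pos]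
        have h := hdegA e.1 (mem_univ _)
        unfold degA at h
        omega
      obtain ⟨ea, hea⟩ := hne0
      rw [mem_filter] at hea
      obtain ⟨heaS, hea1⟩ := hea
      have hj : i ≤ idx ea := by
        by_contra h
        push_neg at h
        rw [mem_sdiff] at ha
        refine ha.2 ?_
        rw [mem_biUnion]
        exact ⟨idx ea, mem_range.mpr h, mem_image.mpr ⟨ea, mem_filter.mpr ⟨heaS, rfl⟩, hea1⟩⟩
      have hbi : i ≤ degB S e.2 := by
        by_cases h0 : i = 0
        · omega
        · rw [if_neg h0, mem_image] at hb
          obtain ⟨e'', he'', h2⟩ := hb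
          rw [mem_filter] at he''
          have h3 := hAlt e'' he''.1
          rw [he''.2, h2] at h3
          omega
      rcases eq_or_lt_of_le hj with hji | hji
      · have heaM : ea ∈ S.filter fun e' => idx e' = i := mem_filter.mpr ⟨heaS, hji.symm⟩
        have hnee : e ≠ ea := fun h => heM (h ▸ heaM)
        exact (hmat e (mem_insert_self _ _) ea (mem_insert_of_mem heaM) hnee).1 hea1.symm
      · by_cases hdb : i + 1 ≤ degB S e.2
        · obtain ⟨eb, hebS, heb2, hebidx⟩ := hsurj e.2 i (by omega)
          have hebM : eb ∈ S.filter fun e' => idx e' = i := mem_filter.mpr ⟨hebS, hebidx⟩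
          have hnee : e ≠ eb := fun h => heM (h ▸ hebM)
          exact (hmat e (mem_insert_self _ _) eb (mem_insert_of_mem hebM) hnee).2 heb2.symm
        · have hdeq : degB S e.2 = i := by omega
          have heNS : e ∉ S := by
            intro heS
            have hee := huniq e heS ea heaS hea1.symm
            have h1 := hAlt e heS
            rw [← hee] at hji
            omega
          apply hno
          have heqa : (e.1, ea.2) = ea := Prod.ext hea1.symm rfl
          have heqe : (e.1, e.2) = e := Prod.mk.eta
          refine ⟨e.1, e.2, ea.2, heqa ▸ heaS, heqe ▸ heE, heqe ▸ heNS, ?_⟩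
          have h1 := hAlt ea heaS
          omega
end

section
/- Let S* be an optimal semi-matching (admitting no degree-minimizing path of any length) in a bipartite graph G = (A, B, E), with maximal degree d*. Then S* can be partitioned into matchings M_1, ..., M_{d*} such that each M_i is a maximum matching in the induced subgraph on A_i × B_i, where A_1 = A, B_1 = B, and for i > 1, A_i = A \ (A(M_1) ∪ ... ∪ A(M_{i-1})) and B_i = B(M_{i-1}). -/
open Finset

variable {α β : Type*} [Fintype α] [Fintype β] [DecidableEq α] [DecidableEq β]

set_option linter.unusedSectionVars false
set_option maxHeartbeats 1000000

/-- An injective numbering of the elements of `α`. -/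
noncomputable def pkey (a : α) : ℕ := (Fintype.equivFin α a).val

lemma pkey_inj {a a' : α} (h : pkey a = pkey a') : a = a' := by
  have := (Fintype.equivFin α).injective (Fin.val_injective h)
  exact this

/-- Rank of an edge among the edges of `S` sharing its right endpoint. -/
noncomputable def rkE (S : Finset (α × β)) (e : α × β) : ℕ :=
  (S.filter fun e' => e'.2 = e.2 ∧ pkey e'.1 < pkey e.1).card

lemma rkE_lt_degB {S : Finset (α × β)} {e : α × β} (he : e ∈ S) :
    rkE S e < degB S e.2 := by
  have hsub : (S.filter fun e' => e'.2 = e.2 ∧ pkey e'.1 < pkey e.1) ⊆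
      (S.filter fun e' => e'.2 = e.2).erase e := by
    intro x hx
    simp only [mem_filter] at hx
    refine mem_erase.2 ⟨?_, mem_filter.2 ⟨hx.1, hx.2.1⟩⟩
    rintro rfl; exact lt_irrefl _ hx.2.2
  have h1 : e ∈ S.filter fun e' => e'.2 = e.2 := mem_filter.2 ⟨he, rfl⟩
  have := Finset.card_le_card hsub
  rw [Finset.card_erase_of_mem h1] at this
  have hpos : 0 < degB S e.2 := Finset.card_pos.2 ⟨e, h1⟩
  unfold rkE degB at *
  omega

lemma rkE_strict {S : Finset (α × β)} {e e' : α × β} (he : e ∈ S) (h2 : e.2 = e'.2)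
    (hk : pkey e.1 < pkey e'.1) : rkE S e < rkE S e' := by
  have hsub : insert e (S.filter fun x => x.2 = e.2 ∧ pkey x.1 < pkey e.1) ⊆
      S.filter fun x => x.2 = e'.2 ∧ pkey x.1 < pkey e'.1 := by
    intro x hx
    rcases mem_insert.1 hx with rfl | hx
    · exact mem_filter.2 ⟨he, h2, hk⟩
    · simp only [mem_filter] at hx ⊢
      exact ⟨hx.1, h2 ▸ hx.2.1, lt_trans hx.2.2 hk⟩
  have hnm : e ∉ S.filter fun x => x.2 = e.2 ∧ pkey x.1 < pkey e.1 := by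
    simp only [mem_filter]; rintro ⟨-, -, h⟩; exact lt_irrefl _ h
  have := Finset.card_le_card hsub
  rw [Finset.card_insert_of_notMem hnm] at this
  unfold rkE
  omega

/-- Ranks are injective among edges at a common right endpoint. -/
lemma rkE_injOn {S : Finset (α × β)} {e e' : α × β} (he : e ∈ S) (he' : e' ∈ S)
    (h2 : e.2 = e'.2) (hr : rkE S e = rkE S e') : e = e' := by
  by_cases h1 : e.1 = e'.1
  · exact Prod.ext h1 h2
  rcases lt_trichotomy (pkey e.1) (pkey e'.1) with h | h | h
  · exact absurd hr (Nat.ne_of_lt (rkE_strict he h2 h))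
  · exact absurd (pkey_inj h) h1
  · exact absurd hr.symm (Nat.ne_of_lt (rkE_strict he' h2.symm h))

/-- Every rank below the degree is attained. -/
lemma rkE_surj (S : Finset (α × β)) (b : β) {j : ℕ} (hj : j < degB S b) :
    ∃ e ∈ S, e.2 = b ∧ rkE S e = j := by
  have h := Finset.surj_on_of_inj_on_of_card_le
    (s := S.filter fun e => e.2 = b) (t := Finset.range (degB S b))
    (fun e _ => rkE S e)
    (fun e he => by
      simp only [mem_filter] at he
      exact Finset.mem_range.2 (he.2 ▸ rkE_lt_degB he.1))
    (fun e e' he he' hr => by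
      simp only [mem_filter] at he he'
      exact rkE_injOn he.1 he'.1 (he.2.trans he'.2.symm) hr)
    (by rw [Finset.card_range]; rfl)
  obtain ⟨e, he, hej⟩ := h j (Finset.mem_range.2 hj)
  simp only [mem_filter] at he
  exact ⟨e, he.1, he.2, hej.symm⟩

lemma semi_unique {S : Finset (α × β)} (hA : ∀ a : α, degA S a = 1) :
    ∀ e ∈ S, ∀ e' ∈ S, e.1 = e'.1 → e = e' := by
  intro e he e' he' h1
  have h := hA e.1
  have m1 : e ∈ S.filter fun x => x.1 = e.1 := mem_filter.2 ⟨he, rfl⟩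
  have m2 : e' ∈ S.filter fun x => x.1 = e.1 := mem_filter.2 ⟨he', h1.symm⟩
  exact Finset.card_le_one.1 (le_of_eq h) e m1 e' m2

lemma semi_exists {S : Finset (α × β)} (hA : ∀ a : α, degA S a = 1) (a : α) :
    ∃ b, (a, b) ∈ S := by
  have h := hA a
  obtain ⟨e, he⟩ := Finset.card_pos.1 (h ▸ Nat.one_pos)
  rw [mem_filter] at he
  exact ⟨e.2, by rw [← he.2]; simpa using he.1⟩

lemma aux_max (E S : Finset (α × β)) (hSE : S ⊆ E) (hA : ∀ a : α, degA S a = 1)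
    (hno : NoDegMinPath E S) (i : ℕ) (M' : Finset (α × β))
    (hM'sub : M' ⊆ E.filter fun e =>
        e.1 ∈ Finset.univ \ ((Finset.range i).biUnion fun j =>
          ((S.filter fun x => rkE S x = j)).image Prod.fst) ∧
        e.2 ∈ (if i = 0 then Finset.univ
          else ((S.filter fun x => rkE S x = i - 1)).image Prod.snd))
    (hM' : IsMatching M') :
    M'.card ≤ (S.filter fun e => rkE S e = i).card := by
  classical
  -- dispose of the case where `α` is empty
  by_cases hα : Nonempty α
  swap
  · have : M' = ∅ := Finset.eq_empty_of_forall_notMem fun e he => hα ⟨e.1⟩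
    simp [this]
  haveI := hα
  -- basic facts about the semi-matching
  have huniq := semi_unique (S := S) hA
  have hex := semi_exists (S := S) hA
  choose sp hsp using hex
  have hspu : ∀ a b, (a, b) ∈ S → b = sp a := fun a b h =>
    congrArg Prod.snd (huniq _ h _ (hsp a) rfl)
  set B' : Finset β := M'.image Prod.snd with hB'
  have hpaux : ∀ b : β, ∃ a : α, b ∈ B' → (a, b) ∈ M' := by
    intro b
    by_cases h : b ∈ B'
    · obtain ⟨e, he, h2⟩ := Finset.mem_image.1 h
      exact ⟨e.1, fun _ => by rwa [show (e.1, b) = e from Prod.ext rfl h2.symm]⟩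
    · exact ⟨Classical.arbitrary α, fun hc => absurd hc h⟩
  choose pa hpa using hpaux
  set g : β → β := fun b => sp (pa b) with hgdef
  -- unpacking membership in the restricted edge set
  have hsubE : ∀ e ∈ M', e ∈ E := fun e he => (mem_filter.1 (hM'sub he)).1
  have hrk_ge : ∀ e ∈ M', i ≤ rkE S (e.1, sp e.1) := by
    intro e he
    have h1 := (mem_filter.1 (hM'sub he)).2.1
    rw [Finset.mem_sdiff, Finset.mem_biUnion] at h1
    by_contra hlt
    push_neg at hlt
    exact h1.2 ⟨rkE S (e.1, sp e.1), Finset.mem_range.2 hlt,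
      Finset.mem_image.2 ⟨(e.1, sp e.1), mem_filter.2 ⟨hsp e.1, rfl⟩, rfl⟩⟩
  have hdegB' : ∀ b ∈ B', i ≤ degB S b := by
    intro b hb
    obtain ⟨e, he, h2⟩ := Finset.mem_image.1 hb
    have h1 := (mem_filter.1 (hM'sub he)).2.2
    rcases Nat.eq_zero_or_pos i with hi | hi
    · omega
    · rw [if_neg (by omega)] at h1
      obtain ⟨e', he', h2'⟩ := Finset.mem_image.1 h1
      rw [mem_filter] at he'
      have := rkE_lt_degB he'.1
      rw [h2', he'.2, h2] at this
      omega
  -- the degree of any successor is at least `i + 1`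
  have hstep_deg : ∀ b ∈ B', i + 1 ≤ degB S (g b) := by
    intro b hb
    have h1 := hrk_ge _ (hpa b hb)
    have h2 := rkE_lt_degB (S := S) (e := (pa b, sp (pa b))) (hsp (pa b))
    simp only [hgdef]
    dsimp only at h1 h2 ⊢
    omega
  -- the walk step is injective where relevant
  have hback : ∀ x y, x ∈ B' → y ∈ B' → g x = g y → degB S (g x) = i + 1 → x = y := by
    intro x y hx hy hgxy hdeg
    have hex1 : (pa x, sp (pa x)) ∈ S := hsp (pa x)
    have hex2 : (pa y, sp (pa y)) ∈ S := hsp (pa y)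
    have hsnd : (pa x, sp (pa x)).2 = (pa y, sp (pa y)).2 := hgxy
    have hr1 : rkE S (pa x, sp (pa x)) = i := by
      have := hrk_ge _ (hpa x hx)
      have h2 := rkE_lt_degB (S := S) hex1
      simp only [hgdef] at hdeg
      dsimp only at this h2 hdeg ⊢
      omega
    have hr2 : rkE S (pa y, sp (pa y)) = i := by
      have := hrk_ge _ (hpa y hy)
      have h2 := rkE_lt_degB (S := S) hex2
      have : degB S (sp (pa y)) = i + 1 := by
        simp only [hgdef] at hdeg hgxy; rw [← hgxy]; exact hdeg
      have h3 := hrk_ge _ (hpa y hy)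
      dsimp only at h2 h3 this ⊢
      omega
    have heq := rkE_injOn hex1 hex2 hsnd (hr1.trans hr2.symm)
    have hpaeq : pa x = pa y := congrArg Prod.fst heq
    by_contra hxy
    have hne : (pa x, x) ≠ (pa y, y) := fun hc => hxy (congrArg Prod.snd hc)
    exact (hM' _ (hpa x hx) _ (hpa y hy) hne).1 (by rw [hpaeq])
  -- chains of equal walks can be traced back
  have backchain : ∀ x y s t, s ≤ t →
      (∀ u, u < s → g^[u] x ∈ B') → (∀ u, u < t → g^[u] y ∈ B') →
      (∀ u, 1 ≤ u → u ≤ s → degB S (g^[u] x) = i + 1) →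
      (∀ u, 1 ≤ u → u ≤ t → degB S (g^[u] y) = i + 1) →
      degB S x = i → g^[s] x = g^[t] y → s = t ∧ x = y := by
    intro x y s t hst hxm hym hxd hyd hdx heq
    have hchain : ∀ k, k ≤ s → g^[s - k] x = g^[t - k] y := by
      intro k
      induction k with
      | zero => intro _; simpa using heq
      | succ k ih =>
        intro hk
        have h1 := ih (by omega)
        have e1 : s - k = (s - (k + 1)) + 1 := by omega
        have e2 : t - k = (t - (k + 1)) + 1 := by omega
        rw [e1, Function.iterate_succ_apply'] at h1
        rw [e2, Function.iterate_succ_apply'] at h1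
        exact hback _ _ (hxm _ (by omega)) (hym _ (by omega)) h1
          (by rw [← Function.iterate_succ_apply' g (s - (k + 1)) x,
                show (s - (k + 1)).succ = s - k by omega]
              exact hxd _ (by omega) (by omega))
    have h0 := hchain s le_rfl
    rw [Nat.sub_self] at h0
    simp only [Function.iterate_zero, id] at h0
    have hts : t = s := by
      by_contra hne
      have h1 : 1 ≤ t - s := by omega
      have h2 := hyd (t - s) h1 (by omega)
      rw [← h0] at h2
      omega
    subst hts
    rw [Nat.sub_self] at h0
    simp only [Function.iterate_zero, id] at h0
    exact ⟨rfl, h0⟩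
  -- every walk from a degree-`i` vertex of `B'` ends outside `B'`
  have key : ∀ b0, b0 ∈ B' → degB S b0 = i →
      ∃ n, (∀ t, 1 ≤ t → t ≤ n → degB S (g^[t] b0) = i + 1) ∧
        (∀ t, t < n → g^[t] b0 ∈ B') ∧ g^[n] b0 ∉ B' := by
    intro b0 hb0 hdeg0
    by_contra hQ
    push_neg at hQ
    have R : ∀ n, (∀ t, 1 ≤ t → t ≤ n → degB S (g^[t] b0) = i + 1) ∧
        (∀ t, t ≤ n → g^[t] b0 ∈ B') := by
      intro n
      induction n with
      | zero =>
        refine ⟨fun t h1 h2 => by omega, fun t ht => ?_⟩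
        have : t = 0 := by omega
        simpa [this] using hb0
      | succ n ih =>
        have hwn : g^[n] b0 ∈ B' := ih.2 n le_rfl
        have hstep : i + 1 ≤ degB S (g^[n + 1] b0) := by
          rw [Function.iterate_succ_apply']; exact hstep_deg _ hwn
        have hdeq : degB S (g^[n + 1] b0) = i + 1 := by
          by_contra hne
          have hge : i + 2 ≤ degB S (g^[n + 1] b0) := by omega
          -- WIN: construct a degree-minimizing path
          have hmem : ∀ t, t ≤ n → g^[t] b0 ∈ B' := fun t ht => ih.2 t ht
          have hdmid : ∀ t, 1 ≤ t → t ≤ n → degB S (g^[t] b0) = i + 1 := ih.1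
          have hwinj : ∀ s t, s ≤ n → t ≤ n → g^[s] b0 = g^[t] b0 → s = t := by
            intro s t hs ht heq
            rcases le_total s t with h | h
            · exact (backchain b0 b0 s t h (fun u hu => hmem u (by omega))
                (fun u hu => hmem u (by omega)) (fun u h1 h2 => hdmid u h1 (by omega))
                (fun u h1 h2 => hdmid u h1 (by omega)) hdeg0 heq).1
            · exact ((backchain b0 b0 t s h (fun u hu => hmem u (by omega))
                (fun u hu => hmem u (by omega)) (fun u h1 h2 => hdmid u h1 (by omega))
                (fun u h1 h2 => hdmid u h1 (by omega)) hdeg0 heq.symm).1).symm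
          have hdle : ∀ t, t ≤ n → degB S (g^[t] b0) ≤ i + 1 := by
            intro t ht
            rcases Nat.eq_zero_or_pos t with rfl | h
            · simpa [hdeg0] using Nat.le_succ i
            · rw [hdmid t h ht]
          have hdtop_ne : ∀ t, t ≤ n → g^[t] b0 ≠ g^[n + 1] b0 := by
            intro t ht hc
            have h1 := hdle t ht
            rw [hc] at h1
            omega
          have hsucc : ∀ t, g^[t + 1] b0 = g (g^[t] b0) :=
            fun t => Function.iterate_succ_apply' g t b0
          apply hno (n + 1) (fun j : Fin (n + 1) => pa (g^[n - (j : ℕ)] b0))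
            (fun j : Fin (n + 2) => g^[n + 1 - (j : ℕ)] b0)
          have hbinj : Function.Injective
              (fun j : Fin (n + 2) => g^[n + 1 - (j : ℕ)] b0) := by
            intro j j' h
            dsimp only at h
            have hj := j.isLt
            have hj' := j'.isLt
            rcases Nat.eq_zero_or_pos (j : ℕ) with hz | hz <;>
              rcases Nat.eq_zero_or_pos (j' : ℕ) with hz' | hz'
            · exact Fin.ext (by omega)
            · exfalso
              rw [hz] at h
              exact hdtop_ne (n + 1 - (j' : ℕ)) (by omega) (by rw [← h]; norm_num)
            · exfalso
              rw [hz'] at h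
              exact hdtop_ne (n + 1 - (j : ℕ)) (by omega) (by rw [h]; norm_num)
            · have := hwinj _ _ (by omega) (by omega) h
              exact Fin.ext (by omega)
          refine ⟨Nat.succ_pos n, ?_, hbinj, ?_, ?_, ?_, ?_⟩
          · -- injectivity of the `a` sequence
            intro j j' h
            dsimp only at h
            have hj := j.isLt
            have hj' := j'.isLt
            have m1 : (pa (g^[n - (j : ℕ)] b0), g^[n - (j : ℕ)] b0) ∈ M' :=
              hpa _ (hmem _ (by omega))
            have m2 : (pa (g^[n - (j' : ℕ)] b0), g^[n - (j' : ℕ)] b0) ∈ M' :=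
              hpa _ (hmem _ (by omega))
            have hww : g^[n - (j : ℕ)] b0 = g^[n - (j' : ℕ)] b0 := by
              by_contra hc
              exact (hM' _ m1 _ m2 (fun hcc => hc (congrArg Prod.snd hcc))).1 h
            have := hwinj _ _ (by omega) (by omega) hww
            exact Fin.ext (by omega)
          · -- matching edges are in S
            intro j
            have hj := j.isLt
            simp only [Fin.coe_castSucc]
            rw [show n + 1 - (j : ℕ) = (n - (j : ℕ)) + 1 by omega, hsucc]
            exact hsp _
          · -- non-matching edges
            intro j
            have hj := j.isLt
            simp only [Fin.val_succ]
            rw [show n + 1 - ((j : ℕ) + 1) = n - (j : ℕ) by omega]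
            have m1 : (pa (g^[n - (j : ℕ)] b0), g^[n - (j : ℕ)] b0) ∈ M' :=
              hpa _ (hmem _ (by omega))
            refine ⟨hsubE _ m1, ?_⟩
            intro hc
            have h1 := hspu _ _ hc
            have h2 : g^[n - (j : ℕ)] b0 = g^[n - (j : ℕ) + 1] b0 := by
              rw [hsucc]; exact h1
            rcases Nat.lt_or_ge (n - (j : ℕ) + 1) (n + 1) with h | h
            · have := hwinj _ _ (by omega) (by omega) h2
              omega
            · have he : n - (j : ℕ) = n := by omega
              rw [he] at h2
              exact hdtop_ne n le_rfl h2
          · -- degrees are non-increasing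
            intro j
            have hj := j.isLt
            simp only [Fin.coe_castSucc, Fin.val_succ]
            rw [show n + 1 - ((j : ℕ) + 1) = n - (j : ℕ) by omega]
            have h1 : degB S (g^[n - (j : ℕ)] b0) ≤ i + 1 := hdle _ (by omega)
            have h2 : i + 1 ≤ degB S (g^[n + 1 - (j : ℕ)] b0) := by
              rcases Nat.lt_or_ge (n + 1 - (j : ℕ)) (n + 1) with h | h
              · exact le_of_eq (hdmid _ (by omega) (by omega)).symm
              · rw [show n + 1 - (j : ℕ) = n + 1 by omega]
                omega
            omega
          · -- total degree drop
            simp only [Fin.val_last, Nat.sub_self, Function.iterate_zero, id,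
              Fin.val_zero, Nat.sub_zero]
            omega
        have hdall : ∀ t, 1 ≤ t → t ≤ n + 1 → degB S (g^[t] b0) = i + 1 := by
          intro t h1 h2
          rcases Nat.lt_or_ge t (n + 1) with h | h
          · exact ih.1 t h1 (by omega)
          · have ht : t = n + 1 := by omega
            rw [ht]; exact hdeq
        refine ⟨hdall, fun t ht => ?_⟩
        rcases Nat.lt_or_ge t (n + 1) with h | h
        · exact ih.2 t (by omega)
        · have ht : t = n + 1 := by omega
          rw [ht]
          exact hQ (n + 1) hdall (fun u hu => ih.2 u (by omega))
    obtain ⟨x, y, hxy, hfeq⟩ := Fintype.exists_ne_map_eq_of_card_lt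
      (fun j : Fin (Fintype.card β + 1) => g^[(j : ℕ)] b0) (by simp)
    have hBCH : ∀ s t : ℕ, s ≤ t → g^[s] b0 = g^[t] b0 → s = t := by
      intro s t hst heq
      exact (backchain b0 b0 s t hst (fun u _ => (R u).2 u le_rfl)
        (fun u _ => (R u).2 u le_rfl) (fun u h1 _ => (R u).1 u h1 le_rfl)
        (fun u h1 _ => (R u).1 u h1 le_rfl) hdeg0 heq).1
    apply hxy
    apply Fin.ext
    rcases le_total (x : ℕ) (y : ℕ) with h | h
    · exact hBCH _ _ h hfeq
    · exact (hBCH _ _ h hfeq.symm).symm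
  -- final counting
  have hex2 : ∀ b : β, ∃ n, (b ∈ B' ∧ degB S b = i) →
      ((∀ t, 1 ≤ t → t ≤ n → degB S (g^[t] b) = i + 1) ∧
        (∀ t, t < n → g^[t] b ∈ B') ∧ g^[n] b ∉ B') := by
    intro b
    by_cases h : b ∈ B' ∧ degB S b = i
    · obtain ⟨n, hn⟩ := key b h.1 h.2
      exact ⟨n, fun _ => hn⟩
    · exact ⟨0, fun hc => absurd hc h⟩
  choose nf hnf using hex2
  set T0 := B'.filter (fun b => ¬ (i + 1 ≤ degB S b)) with hT0
  have hT0deg : ∀ b ∈ T0, b ∈ B' ∧ degB S b = i := by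
    intro b hb
    rw [hT0, mem_filter] at hb
    have := hdegB' b hb.1
    exact ⟨hb.1, by omega⟩
  have hmaps : ∀ b ∈ T0, g^[nf b] b ∈ (univ.filter fun c => i + 1 ≤ degB S c) \ B' := by
    intro b hb
    obtain ⟨hd, hm, hout⟩ := hnf b (hT0deg b hb)
    have hpos : 0 < nf b := by
      rcases Nat.eq_zero_or_pos (nf b) with h | h
      · exfalso
        apply hout
        rw [h]
        simpa using (hT0deg b hb).1
      · exact h
    refine Finset.mem_sdiff.2 ⟨Finset.mem_filter.2 ⟨mem_univ _, ?_⟩, hout⟩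
    rw [hd (nf b) hpos le_rfl]
  have hinj0 : ∀ b ∈ T0, ∀ b' ∈ T0, g^[nf b] b = g^[nf b'] b' → b = b' := by
    intro b hb b' hb' heq
    obtain ⟨hd, hm, -⟩ := hnf b (hT0deg b hb)
    obtain ⟨hd', hm', -⟩ := hnf b' (hT0deg b' hb')
    rcases le_total (nf b) (nf b') with h | h
    · exact (backchain b b' _ _ h hm hm' hd hd' (hT0deg b hb).2 heq).2
    · exact ((backchain b' b _ _ h hm' hm hd' hd (hT0deg b' hb').2 heq.symm).2).symm
  have hcard1 : T0.card ≤ ((univ.filter fun c => i + 1 ≤ degB S c) \ B').card :=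
    Finset.card_le_card_of_injOn (fun b => g^[nf b] b) hmaps
      (fun b hb b' hb' h => hinj0 b hb b' hb' h)
  have hsnd_inj : Set.InjOn Prod.snd (M' : Set (α × β)) := by
    intro e he e' he' h
    by_contra hc
    exact (hM' e he e' he' hc).2 h
  have hcardM' : M'.card = B'.card := (Finset.card_image_of_injOn hsnd_inj).symm
  have hsplit : (B'.filter fun c => i + 1 ≤ degB S c).card + T0.card = B'.card :=
    Finset.card_filter_add_card_filter_not _
  have hBfilter : B'.filter (fun c => i + 1 ≤ degB S c) =
      (univ.filter fun c => i + 1 ≤ degB S c) ∩ B' := by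
    ext c
    simp only [mem_filter, Finset.mem_inter, mem_univ, true_and]
    tauto
  have htot := Finset.card_inter_add_card_sdiff
    (univ.filter fun c => i + 1 ≤ degB S c) B'
  have hMi_image : (S.filter fun e => rkE S e = i).image Prod.snd =
      univ.filter fun c => i + 1 ≤ degB S c := by
    ext c
    simp only [Finset.mem_image, mem_filter, mem_univ, true_and]
    constructor
    · rintro ⟨e, ⟨heS, hre⟩, rfl⟩
      have := rkE_lt_degB heS
      omega
    · intro h
      obtain ⟨e, he, h2, h3⟩ := rkE_surj S c (show i < degB S c by omega)
      exact ⟨e, ⟨he, h3⟩, h2⟩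
  have hMi_inj : Set.InjOn Prod.snd ((S.filter fun e => rkE S e = i) : Set (α × β)) := by
    intro e he e' he' h
    rw [Finset.mem_coe, mem_filter] at he he'
    exact rkE_injOn he.1 he'.1 h (he.2.trans he'.2.symm)
  have hcardMi : (univ.filter fun c => i + 1 ≤ degB S c).card =
      (S.filter fun e => rkE S e = i).card := by
    rw [← hMi_image]
    exact Finset.card_image_of_injOn hMi_inj
  rw [hBfilter] at hsplit
  omega


/-- An optimal semi-matching `S*` (no degree-minimizing path of any length) with maximal
degree `d*` can be partitioned into matchings `M 0, …, M (d*-1)` such that each `M i` is a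
maximum matching in `G` restricted to `A_i × B_i`, where `A_0 = A`, `B_0 = B`, and for
`i > 0`, `A_i = A \ (A(M 0) ∪ ⋯ ∪ A(M (i-1)))` and `B_i = B(M (i-1))`. -/
theorem optSemi_decomposition_maximum_matchings (E S : Finset (α × β))
    (hS : IsSemi Finset.univ E S) (hno : NoDegMinPath E S)
    (d : ℕ) (hd : d = maxDeg S) :
    ∃ M : ℕ → Finset (α × β),
      (∀ i < d, ∀ j < d, i ≠ j → Disjoint (M i) (M j)) ∧
      (Finset.range d).biUnion M = S ∧
      ∀ i < d, IsMaximumMatchingIn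
        (E.filter fun e =>
          e.1 ∈ Finset.univ \ ((Finset.range i).biUnion fun j => (M j).image Prod.fst) ∧
          e.2 ∈ (if i = 0 then Finset.univ else (M (i - 1)).image Prod.snd))
        (M i) := by
  have hA : ∀ a : α, degA S a = 1 := fun a => hS.2.2 a (mem_univ a)
  have hSE := hS.1
  have huniq := semi_unique (S := S) hA
  refine ⟨fun j => S.filter fun e => rkE S e = j, ?_, ?_, ?_⟩
  · intro i hi j hj hij
    refine Finset.disjoint_left.2 fun e he1 he2 => ?_
    rw [mem_filter] at he1 he2
    exact hij (he1.2.symm.trans he2.2)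
  · ext e
    simp only [Finset.mem_biUnion, Finset.mem_range, mem_filter]
    constructor
    · rintro ⟨j, hj, heS, -⟩
      exact heS
    · intro he
      refine ⟨rkE S e, ?_, he, rfl⟩
      have h1 := rkE_lt_degB he
      have h2 : degB S e.2 ≤ d := by
        rw [hd]
        exact le_trans (Finset.le_sup (mem_univ e.2)) (le_max_right _ _)
      omega
  · intro i hi
    refine ⟨?_, ?_, ?_⟩
    · intro e he
      rw [mem_filter] at he
      obtain ⟨heS, hri⟩ := he
      refine mem_filter.2 ⟨hSE heS, ?_, ?_⟩
      · rw [Finset.mem_sdiff]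
        refine ⟨mem_univ _, ?_⟩
        rw [Finset.mem_biUnion]
        rintro ⟨j, hj, hmem⟩
        rw [Finset.mem_range] at hj
        obtain ⟨e', he', h1⟩ := Finset.mem_image.1 hmem
        rw [mem_filter] at he'
        have h2 := huniq e' he'.1 e heS h1
        rw [h2] at he'
        omega
      · rcases Nat.eq_zero_or_pos i with rfl | hip
        · simp
        · rw [if_neg (by omega)]
          have h1 := rkE_lt_degB heS
          obtain ⟨e', he', h2, h3⟩ := rkE_surj S e.2 (show i - 1 < degB S e.2 by omega)
          exact Finset.mem_image.2 ⟨e', mem_filter.2 ⟨he', h3⟩, h2⟩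
    · intro e he e' he' hne
      rw [mem_filter] at he he'
      constructor
      · intro h1
        exact hne (huniq e he.1 e' he'.1 h1)
      · intro h2
        exact hne (rkE_injOn he.1 he'.1 h2 (he.2.trans he'.2.symm))
    · intro M' hM'sub hM'
      exact aux_max E S hSE hA hno i M' hM'sub hM'
end

section
/- Let A' ⊆ A, let S be a semi-matching of A' into B admitting no length-2 degree-minimizing path, and let S* be an optimal semi-matching of A' into B with maximal degree d*. Then there exists A'' ⊆ A' with |A''| ≥ |A'|/2 such that (1) the restriction of S to A'' × B has maximal degree at most d*, and (2) the restriction of S to (A' \ A'') × B is a semi-matching of A' \ A'' into B admitting no length-2 degree-minimizing path. -/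
open Finset

variable {α β : Type*} [Fintype α] [Fintype β] [DecidableEq α] [DecidableEq β]

/-!
Keep, at every `b`, at most `d* = maxDeg S*` of its `S`-partners, and let `A''` be the kept
vertices. The dropped part of `S` has degrees `deg_S b - d*`, so a length-2 degree-minimizing path
in it would be one in `S`. For the count: if the `S`-partner of `a` has degree above `d*`, the
absence of length-2 paths puts the `S*`-partner of `a` at `S`-degree at least `d*`. So the vertices
at such heavy `b`, which include all dropped ones, number at most `d*` times the number of `b` with
`deg_S b ≥ d*`, and each of these keeps `d*` vertices.
-/

section Semimatching

omit [Fintype α] [Fintype β] [DecidableEq β]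

variable {A' : Finset α} {E S T K : Finset (α × β)}

lemma degA_le_degA_of_subset (hKS : K ⊆ S) (a : α) : degA K a ≤ degA S a :=
  card_le_card (filter_subset_filter _ hKS)

lemma IsSemi.injOn_fst (hS : IsSemi A' E S) : Set.InjOn Prod.fst (S : Set (α × β)) := by
  intro e he e' he' h
  have hcard : (S.filter fun x => x.1 = e.1).card ≤ 1 := (hS.2.2 e.1 (hS.2.1 e he)).le
  exact card_le_one.1 hcard e (mem_filter.2 ⟨he, rfl⟩) e' (mem_filter.2 ⟨he', h.symm⟩)

lemma IsSemi.snd_eq (hS : IsSemi A' E S) {a : α} {b b' : β} (h : (a, b) ∈ S)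
    (h' : (a, b') ∈ S) : b = b' :=
  congrArg Prod.snd (hS.injOn_fst h h' rfl)

lemma IsSemi.exists_mem (hS : IsSemi A' E S) {a : α} (ha : a ∈ A') : ∃ b, (a, b) ∈ S := by
  obtain ⟨e, he⟩ := card_pos.1 ((hS.2.2 a ha).symm ▸ one_pos)
  obtain ⟨heS, rfl⟩ := mem_filter.1 he
  exact ⟨e.2, heS⟩

lemma IsSemi.degA_eq (hS : IsSemi A' E S) (a : α) : degA S a = if a ∈ A' then 1 else 0 := by
  split_ifs with ha
  · exact hS.2.2 a ha
  · rw [degA, card_eq_zero, filter_eq_empty_iff]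
    rintro e he rfl
    exact ha (hS.2.1 e he)

lemma IsSemi.degA_eq_degA (hS : IsSemi A' E S) (hT : IsSemi A' E T) (a : α) :
    degA S a = degA T a := by
  rw [hS.degA_eq, hT.degA_eq]

lemma IsSemi.image_fst (hS : IsSemi A' E S) : S.image Prod.fst = A' := by
  ext a
  simp only [mem_image]
  constructor
  · rintro ⟨e, he, rfl⟩
    exact hS.2.1 e he
  · intro ha
    obtain ⟨b, hb⟩ := hS.exists_mem ha
    exact ⟨(a, b), hb, rfl⟩

lemma IsSemi.card_eq (hS : IsSemi A' E S) : S.card = A'.card := by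
  rw [← hS.image_fst, card_image_of_injOn hS.injOn_fst]

lemma IsSemi.card_image_fst (hS : IsSemi A' E S) (hKS : K ⊆ S) :
    (K.image Prod.fst).card = K.card :=
  card_image_of_injOn (hS.injOn_fst.mono (coe_subset.2 hKS))

lemma IsSemi.fst_mem_image_iff (hS : IsSemi A' E S) (hKS : K ⊆ S) {e : α × β} (he : e ∈ S) :
    e.1 ∈ K.image Prod.fst ↔ e ∈ K := by
  refine ⟨fun h => ?_, mem_image_of_mem _⟩
  obtain ⟨k, hk, hke⟩ := mem_image.1 h
  rwa [← hS.injOn_fst (hKS hk) he hke]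

lemma IsSemi.filter_fst_mem_image (hS : IsSemi A' E S) (hKS : K ⊆ S) :
    S.filter (fun e => e.1 ∈ K.image Prod.fst) = K := by
  ext e
  rw [mem_filter]
  exact ⟨fun h => (hS.fst_mem_image_iff hKS h.1).1 h.2,
    fun h => ⟨hKS h, (hS.fst_mem_image_iff hKS (hKS h)).2 h⟩⟩

lemma IsSemi.restrict (hS : IsSemi A' E S) {A'' : Finset α} (hA'' : A'' ⊆ A') :
    IsSemi A'' E (S.filter fun e => e.1 ∈ A'') := by
  refine ⟨(filter_subset _ _).trans hS.1, fun e he => (mem_filter.1 he).2, fun a ha => ?_⟩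
  rw [degA, filter_filter, ← hS.2.2 a (hA'' ha), degA]
  congr 1
  exact filter_congr fun e _ => ⟨fun h => h.2, fun h => ⟨h ▸ ha, h⟩⟩

end Semimatching

section DegreeCapping

omit [Fintype α] [Fintype β]

variable {A' : Finset α} {E S T K : Finset (α × β)}

lemma IsSemi.filter_fst_mem_sdiff_image (hS : IsSemi A' E S) (hKS : K ⊆ S) :
    S.filter (fun e => e.1 ∈ A' \ K.image Prod.fst) = S \ K := by
  ext e
  simp only [mem_filter, mem_sdiff]
  exact ⟨fun h => ⟨h.1, (hS.fst_mem_image_iff hKS h.1).not.1 h.2.2⟩,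
    fun h => ⟨h.1, hS.2.1 e h.1, (hS.fst_mem_image_iff hKS h.1).not.2 h.2⟩⟩

lemma degB_sdiff (hKS : K ⊆ S) (b : β) : degB (S \ K) b = degB S b - degB K b := by
  have hfilter : (S \ K).filter (fun e => e.2 = b) =
      S.filter (fun e => e.2 = b) \ K.filter (fun e => e.2 = b) := by
    ext e
    simp only [mem_filter, mem_sdiff]
    tauto
  rw [degB, degB, degB, hfilter, card_sdiff_of_subset (filter_subset_filter _ hKS)]

omit [DecidableEq α] in
lemma mem_of_degB_le {d : ℕ} (hKS : K ⊆ S) (hK : ∀ b, degB K b = min (degB S b) d)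
    {a : α} {b : β} (hb : degB S b ≤ d) (hab : (a, b) ∈ S) : (a, b) ∈ K := by
  have hfiber : K.filter (fun e => e.2 = b) = S.filter (fun e => e.2 = b) :=
    eq_of_subset_of_card_le (filter_subset_filter _ hKS)
      (by rw [← degB, ← degB, hK, min_eq_left hb])
  have hmem : (a, b) ∈ S.filter (fun e => e.2 = b) := mem_filter.2 ⟨hab, rfl⟩
  rw [← hfiber] at hmem
  exact (mem_filter.1 hmem).1

lemma IsSemi.degB_le_degB_add_one (hS : IsSemi A' E S) (hno : NoLen2DegMinPath E S) {a : α}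
    {b b' : β} (hab : (a, b) ∈ S) (hab' : (a, b') ∈ E) : degB S b ≤ degB S b' + 1 := by
  by_cases hb' : (a, b') ∈ S
  · rw [hS.snd_eq hab hb']
    exact Nat.le_succ _
  · by_contra! h
    exact hno ⟨a, b', b, hab, hab', hb', h⟩

/-- The `T`-partner of a vertex whose `S`-partner has `S`-degree above `d` has `S`-degree at
least `d`, by `IsSemi.degB_le_degB_add_one`. -/
lemma IsSemi.card_filter_lt_degB_le (hS : IsSemi A' E S) (hT : IsSemi A' E T)
    (hno : NoLen2DegMinPath E S) (d : ℕ) :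
    (S.filter fun e => d < degB S e.2).card ≤ (T.filter fun e => d ≤ degB S e.2).card := by
  rw [← hS.card_image_fst (filter_subset _ _), ← hT.card_image_fst (filter_subset _ _)]
  refine card_le_card fun a ha => ?_
  obtain ⟨⟨a, b⟩, hab, rfl⟩ := mem_image.1 ha
  obtain ⟨habS, hb⟩ := mem_filter.1 hab
  have ha' : a ∈ A' := hS.2.1 _ habS
  obtain ⟨b', hab'⟩ := hT.exists_mem ha'
  have hdrop := hS.degB_le_degB_add_one hno habS (hT.1 hab')
  exact mem_image.2 ⟨(a, b'), mem_filter.2 ⟨hab', by simp only at hb ⊢; omega⟩, rfl⟩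

lemma IsSemi.noLen2DegMinPath_sdiff (hS : IsSemi A' E S) (hno : NoLen2DegMinPath E S)
    {d : ℕ} (hKS : K ⊆ S) (hK : ∀ b, degB K b = min (degB S b) d) {E' : Finset (α × β)}
    (hE' : E' ⊆ E) : NoLen2DegMinPath E' (S \ K) := by
  rintro ⟨a, b, b', hab', hab, -, hlt⟩
  obtain ⟨hab'S, hab'K⟩ := mem_sdiff.1 hab'
  have hdrop := hS.degB_le_degB_add_one hno hab'S (hE' hab)
  have hheavy : d < degB S b' := by
    by_contra! h
    exact hab'K (mem_of_degB_le hKS hK h hab'S)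
  rw [degB_sdiff hKS, degB_sdiff hKS, hK, hK] at hlt
  omega

end DegreeCapping

section Counting

omit [Fintype α]

variable {A' : Finset α} {E S T K : Finset (α × β)}

omit [DecidableEq α] in
lemma card_filter_snd_eq_sum (S : Finset (α × β)) (p : β → Prop) [DecidablePred p] :
    (S.filter fun e => p e.2).card = ∑ b, if p b then degB S b else 0 := by
  rw [card_eq_sum_card_fiberwise fun e _ => mem_univ e.2]
  refine sum_congr rfl fun b _ => ?_
  split_ifs with hb
  · rw [degB, filter_filter]
    congr 1
    exact filter_congr fun e _ => ⟨fun h => h.2, fun h => ⟨h ▸ hb, h⟩⟩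
  · rw [filter_filter, card_eq_zero, filter_eq_empty_iff]
    rintro e - ⟨he, rfl⟩
    exact hb he

omit [DecidableEq α] in
lemma card_eq_sum_degB (S : Finset (α × β)) : S.card = ∑ b, degB S b := by
  simpa using card_filter_snd_eq_sum S fun _ => True

lemma exists_subset_degB_eq_min (S : Finset (α × β)) (d : ℕ) :
    ∃ K ⊆ S, ∀ b, degB K b = min (degB S b) d := by
  have hfiber : ∀ b, ∃ t ⊆ S.filter (fun e => e.2 = b), t.card = min (degB S b) d :=
    fun b => exists_subset_card_eq (min_le_left _ _)
  choose t hts htcard using hfiber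
  have hsnd : ∀ b, ∀ e ∈ t b, e.2 = b := fun b e he => (mem_filter.1 (hts b he)).2
  refine ⟨univ.biUnion t, biUnion_subset.2 fun b _ => (hts b).trans (filter_subset _ _),
    fun b => ?_⟩
  rw [degB, ← htcard b]
  congr 1
  ext e
  simp only [mem_filter, mem_biUnion, mem_univ, true_and]
  constructor
  · rintro ⟨⟨b', he⟩, rfl⟩
    rwa [hsnd b' e he]
  · exact fun he => ⟨⟨b, he⟩, hsnd b e he⟩

lemma IsSemi.sum_degB_sub_le_sum_min (hS : IsSemi A' E S) (hT : IsSemi A' E T)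
    (hno : NoLen2DegMinPath E S) {d : ℕ} (hd : ∀ b, degB T b ≤ d) :
    ∑ b, (degB S b - d) ≤ ∑ b, min (degB S b) d :=
  calc ∑ b, (degB S b - d)
      ≤ ∑ b, if d < degB S b then degB S b else 0 :=
        sum_le_sum fun b _ => by split_ifs <;> omega
    _ = (S.filter fun e => d < degB S e.2).card :=
        (card_filter_snd_eq_sum S fun b => d < degB S b).symm
    _ ≤ (T.filter fun e => d ≤ degB S e.2).card := hS.card_filter_lt_degB_le hT hno d
    _ = ∑ b, if d ≤ degB S b then degB T b else 0 :=
        card_filter_snd_eq_sum T fun b => d ≤ degB S b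
    _ ≤ ∑ b, min (degB S b) d :=
        sum_le_sum fun b _ => by have := hd b; split_ifs <;> omega

lemma IsSemi.card_sdiff_le_card (hS : IsSemi A' E S) (hT : IsSemi A' E T)
    (hno : NoLen2DegMinPath E S) {d : ℕ} (hd : ∀ b, degB T b ≤ d) (hKS : K ⊆ S)
    (hK : ∀ b, degB K b = min (degB S b) d) : (S \ K).card ≤ K.card := by
  have hsdiff : ∀ b, degB (S \ K) b = degB S b - d := fun b => by
    rw [degB_sdiff hKS, hK]
    omega
  simp only [card_eq_sum_degB, hsdiff, hK]
  exact hS.sum_degB_sub_le_sum_min hT hno hd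

end Counting

lemma degA_le_maxDeg (S : Finset (α × β)) (a : α) : degA S a ≤ maxDeg S :=
  (le_sup (mem_univ a)).trans (le_max_left _ _)

lemma degB_le_maxDeg (S : Finset (α × β)) (b : β) : degB S b ≤ maxDeg S :=
  (le_sup (mem_univ b)).trans (le_max_right _ _)

lemma maxDeg_le {S : Finset (α × β)} {d : ℕ} (hA : ∀ a, degA S a ≤ d) (hB : ∀ b, degB S b ≤ d) : maxDeg S ≤ d :=
  max_le (Finset.sup_le fun a _ => hA a) (Finset.sup_le fun b _ => hB b)

/-- Halving lemma: if `S` is a semi-matching of `A'` into `B` with no length-2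
degree-minimizing path and `S*` is an optimal semi-matching of `A'` with maximal degree
`d*`, then some `A'' ⊆ A'` with `|A''| ≥ |A'|/2` satisfies: the restriction of `S` to
`A'' × B` has maximal degree at most `d*`, and the restriction of `S` to `(A' \ A'') × B`
is a semi-matching of `A' \ A''` with no length-2 degree-minimizing path. -/
theorem semi_halving_lemma (E S Sstar : Finset (α × β)) (A' : Finset α)
    (hS : IsSemi A' E S) (hno : NoLen2DegMinPath E S)
    (hSstar : IsOptSemi A' E Sstar) :
    ∃ A'' ⊆ A', A'.card ≤ 2 * A''.card ∧
      maxDeg (S.filter fun e => e.1 ∈ A'') ≤ maxDeg Sstar ∧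
      IsSemi (A' \ A'') E (S.filter fun e => e.1 ∈ A' \ A'') ∧
      NoLen2DegMinPath (E.filter fun e => e.1 ∈ A' \ A'')
        (S.filter fun e => e.1 ∈ A' \ A'') := by
  obtain ⟨K, hKS, hK⟩ := exists_subset_degB_eq_min S (maxDeg Sstar)
  have hA'' : K.image Prod.fst ⊆ A' := hS.image_fst ▸ image_subset_image hKS
  refine ⟨K.image Prod.fst, hA'', ?_, ?_, hS.restrict sdiff_subset, ?_⟩
  · have hcard := hS.card_sdiff_le_card hSstar.1 hno (degB_le_maxDeg Sstar) hKS hK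
    rw [← hS.card_eq, hS.card_image_fst hKS, ← card_sdiff_add_card_eq_card hKS]
    omega
  · rw [hS.filter_fst_mem_image hKS]
    refine maxDeg_le (fun a => ?_) (fun b => hK b ▸ min_le_right _ _)
    calc degA K a ≤ degA S a := degA_le_degA_of_subset hKS a
      _ = degA Sstar a := hS.degA_eq_degA hSstar.1 a
      _ ≤ maxDeg Sstar := degA_le_maxDeg Sstar a
  · rw [hS.filter_fst_mem_sdiff_image hKS]
    exact hS.noLen2DegMinPath_sdiff hno hKS hK (filter_subset _ _)
end

section
/- Let G = (A, B, E) be a bipartite graph, k > 0 an integer, and d an integer with d ≥ the maximal degree of an optimal semi-matching of G. Let E' ⊆ E be such that for every a ∈ A, deg_{E'}(a) = min{k, deg_E(a)}. Then there is an incomplete d-bounded semi-matching S ⊆ E' with |S| ≥ min{k·d, |A|}. -/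
/-!
The edges of an optimal semi-matching at vertices `a` with `deg_E(a) < k` all survive in `E'`,
and they form an incomplete `d`-bounded semi-matching. Extend it to an inclusion-maximal one `S`
inside `E'`. Either `S` matches all of `A`, or some `a` is unmatched by `S`. Such an `a` was not
matched initially, so `deg_E(a) ≥ k` and `a` has `k` neighbours in `E'`; by maximality each of
them already has degree `d` in `S`, so `|S| ≥ k·d`.
-/

open Finset

variable {α β : Type*} [Fintype α] [Fintype β] [DecidableEq α] [DecidableEq β]

def IsIncompleteSemi (d : ℕ) (S : Finset (α × β)) : Prop :=
  (∀ a, degA S a ≤ 1) ∧ ∀ b, degB S b ≤ d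

section

omit [Fintype α] [Fintype β] [DecidableEq β]

lemma degA_mono {S T : Finset (α × β)} (h : S ⊆ T) (a : α) : degA S a ≤ degA T a :=
  card_le_card (filter_subset_filter _ h)

lemma notMem_of_degA_eq_zero {S : Finset (α × β)} {a : α} (ha : degA S a = 0) (b : β) :
    (a, b) ∉ S := fun h ↦
  (card_pos.mpr ⟨(a, b), mem_filter.mpr ⟨h, rfl⟩⟩ : 0 < degA S a).ne' ha

lemma mem_of_degA_le {E E' : Finset (α × β)} (hE' : E' ⊆ E) {a : α}
    (ha : degA E a ≤ degA E' a) {b : β} (hab : (a, b) ∈ E) : (a, b) ∈ E' := by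
  have : E'.filter (·.1 = a) = E.filter (·.1 = a) :=
    eq_of_subset_of_card_le (filter_subset_filter _ hE') ha
  simpa using this.ge (mem_filter.mpr ⟨hab, rfl⟩)

lemma degA_filter_fst {S : Finset (α × β)} (p : α → Prop) [DecidablePred p] {a : α}
    (ha : p a) : degA (S.filter fun e ↦ p e.1) a = degA S a := by
  rw [degA, degA, filter_filter]
  exact congrArg card (filter_congr fun e _ ↦ ⟨And.right, fun h ↦ ⟨h ▸ ha, h⟩⟩)

end

omit [Fintype α] [Fintype β] [DecidableEq α] in
lemma degB_mono {S T : Finset (α × β)} (h : S ⊆ T) (b : β) : degB S b ≤ degB T b :=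
  card_le_card (filter_subset_filter _ h)

omit [Fintype α] [Fintype β] in
lemma degA_insert_of_notMem {S : Finset (α × β)} {e : α × β} (he : e ∉ S) (a : α) :
    degA (insert e S) a = if e.1 = a then degA S a + 1 else degA S a := by
  rw [degA, filter_insert]
  split
  · rw [card_insert_of_notMem (fun h ↦ he (mem_of_mem_filter _ h)), degA]
  · rfl

omit [Fintype α] [Fintype β] in
lemma degB_insert_of_notMem {S : Finset (α × β)} {e : α × β} (he : e ∉ S) (b : β) :
    degB (insert e S) b = if e.2 = b then degB S b + 1 else degB S b := by
  rw [degB, filter_insert]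
  split
  · rw [card_insert_of_notMem (fun h ↦ he (mem_of_mem_filter _ h)), degB]
  · rfl

omit [Fintype α] in
lemma card_nbr_singleton (E : Finset (α × β)) (a : α) : (nbr E {a}).card = degA E a := by
  refine card_nbij' (fun b ↦ (a, b)) Prod.snd ?_ ?_ ?_ ?_
  all_goals intro x hx
  all_goals grind [nbr, degA]

omit [Fintype β] [DecidableEq β] in
lemma sum_degA_eq_card (S : Finset (α × β)) : ∑ a, degA S a = S.card :=
  (card_eq_sum_card_fiberwise fun e _ ↦ mem_univ e.1).symm

omit [Fintype α] [DecidableEq α] in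
lemma sum_degB_eq_card (S : Finset (α × β)) : ∑ b, degB S b = S.card :=
  (card_eq_sum_card_fiberwise fun e _ ↦ mem_univ e.2).symm

namespace IsIncompleteSemi

omit [Fintype α] [Fintype β]

lemma mono {d : ℕ} {S T : Finset (α × β)} (hT : IsIncompleteSemi d T) (h : S ⊆ T) :
    IsIncompleteSemi d S :=
  ⟨fun a ↦ (degA_mono h a).trans (hT.1 a), fun b ↦ (degB_mono h b).trans (hT.2 b)⟩

lemma insert {d : ℕ} {S : Finset (α × β)} (hS : IsIncompleteSemi d S) {a : α} {b : β}
    (ha : degA S a = 0) (hb : degB S b < d) : IsIncompleteSemi d (insert (a, b) S) := by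
  have hab := notMem_of_degA_eq_zero ha b
  refine ⟨fun x ↦ ?_, fun y ↦ ?_⟩
  · rw [degA_insert_of_notMem hab]
    split_ifs with h
    · obtain rfl : a = x := h; omega
    · exact hS.1 x
  · rw [degB_insert_of_notMem hab]
    split_ifs with h
    · obtain rfl : b = y := h; omega
    · exact hS.2 y

lemma le_degB_of_maximal {d : ℕ} {E' S : Finset (α × β)}
    (hS : Maximal (fun T ↦ T ⊆ E' ∧ IsIncompleteSemi d T) S) {a : α} (ha : degA S a = 0)
    {b : β} (hab : (a, b) ∈ E') : d ≤ degB S b := by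
  by_contra! hb
  have hins := hS.2 ⟨insert_subset hab hS.1.1, hS.1.2.insert ha hb⟩ (subset_insert _ _)
  exact notMem_of_degA_eq_zero ha b (hins (mem_insert_self _ _))

end IsIncompleteSemi

lemma exists_incompleteSemi_card_ge {E' S₀ : Finset (α × β)} {k d : ℕ}
    (hS₀ : IsIncompleteSemi d S₀) (hS₀E' : S₀ ⊆ E')
    (hunmatched : ∀ a, degA S₀ a = 0 → k ≤ degA E' a) :
    ∃ S ⊆ E', IsIncompleteSemi d S ∧ min (k * d) (Fintype.card α) ≤ S.card := by
  obtain ⟨S, hS₀S, hmax⟩ := Finite.exists_le_maximal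
    (p := fun T ↦ T ⊆ E' ∧ IsIncompleteSemi d T) ⟨hS₀E', hS₀⟩
  refine ⟨S, hmax.1.1, hmax.1.2, ?_⟩
  by_cases hall : ∀ a, degA S a = 1
  · simp [← sum_degA_eq_card, hall]
  push Not at hall
  obtain ⟨a, ha⟩ := hall
  have ha0 : degA S a = 0 := by have := hmax.1.2.1 a; omega
  have hk : k ≤ (nbr E' {a}).card := by
    rw [card_nbr_singleton]
    exact hunmatched a (Nat.eq_zero_of_le_zero (ha0 ▸ degA_mono hS₀S a))
  calc min (k * d) (Fintype.card α) ≤ (nbr E' {a}).card * d :=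
        (min_le_left _ _).trans (Nat.mul_le_mul_right d hk)
    _ = ∑ b ∈ nbr E' {a}, d := by rw [sum_const, smul_eq_mul]
    _ ≤ ∑ b ∈ nbr E' {a}, degB S b := sum_le_sum fun b hb ↦
        IsIncompleteSemi.le_degB_of_maximal hmax ha0 (by simpa [nbr] using hb)
    _ ≤ ∑ b, degB S b := sum_le_sum_of_subset (subset_univ _)
    _ = S.card := sum_degB_eq_card S

theorem incomplete_semi_from_stored_edges_general (E E' : Finset (α × β)) (k d : ℕ)
    (Sstar : Finset (α × β)) (hSstar : IsOptSemi Finset.univ E Sstar)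
    (hd : maxDeg Sstar ≤ d)
    (hE' : E' ⊆ E) (hdeg : ∀ a : α, degA E' a = min k (degA E a)) :
    ∃ S ⊆ E', (∀ a : α, degA S a ≤ 1) ∧ (∀ b : β, degB S b ≤ d) ∧
      min (k * d) (Fintype.card α) ≤ S.card := by
  obtain ⟨⟨hSstarE, -, hSstar_one⟩, -⟩ := hSstar
  have hSstar_inc : IsIncompleteSemi d Sstar :=
    ⟨fun a ↦ (hSstar_one a (mem_univ a)).le,
      fun b ↦ (le_sup (f := degB Sstar) (mem_univ b)).trans ((le_max_right _ _).trans hd)⟩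
  have hS₀E' : Sstar.filter (fun e ↦ degA E e.1 < k) ⊆ E' := fun e he ↦ by
    obtain ⟨he, hsmall⟩ := mem_filter.mp he
    exact mem_of_degA_le hE' (by rw [hdeg]; omega) (hSstarE he)
  have hunmatched (a : α) (ha : degA (Sstar.filter fun e ↦ degA E e.1 < k) a = 0) :
      k ≤ degA E' a := by
    by_contra! hak
    rw [degA_filter_fst (degA E · < k) (by rw [hdeg] at hak; omega), hSstar_one a (mem_univ a)]
      at ha
    exact one_ne_zero ha
  obtain ⟨S, hSE', hS, hcard⟩ :=
    exists_incompleteSemi_card_ge (hSstar_inc.mono (filter_subset _ _)) hS₀E' hunmatched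
  exact ⟨S, hSE', hS.1, hS.2, hcard⟩

/-- If `E' ⊆ E` keeps `min{k, deg_E(a)}` edges at every `a ∈ A` and `d` is at least the
optimal semi-matching degree of `G`, then `E'` contains an incomplete `d`-bounded
semi-matching of size at least `min{k·d, |A|}`. -/
theorem incomplete_semi_from_stored_edges (E E' : Finset (α × β)) (k d : ℕ) (hk : 0 < k)
    (Sstar : Finset (α × β)) (hSstar : IsOptSemi Finset.univ E Sstar)
    (hd : maxDeg Sstar ≤ d)
    (hE' : E' ⊆ E) (hdeg : ∀ a : α, degA E' a = min k (degA E a)) :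
    ∃ S ⊆ E', (∀ a : α, degA S a ≤ 1) ∧ (∀ b : β, degB S b ≤ d) ∧
      min (k * d) (Fintype.card α) ≤ S.card :=
  incomplete_semi_from_stored_edges_general E E' k d Sstar hSstar hd hE' hdeg
end

section
/- Let S be a semi-matching in a bipartite graph G = (A, B, E), let b ∈ B with deg_S(b) ≥ d+1 for some integer d ≥ 1, and suppose S admits no degree-minimizing path. Define B_1 = {b}, A_i = Γ_S(B_i), B_{i+1} = Γ(A_i) \ (B_1 ∪ ... ∪ B_i). Then every vertex b' in the union of the sets B_i satisfies deg_S(b') ≥ deg_S(b) − 1. -/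
open Finset

variable {α β : Type*} [Fintype α] [Fintype β] [DecidableEq α] [DecidableEq β]

/-- BFS-like layers starting from `b ∈ B`: the first component is the current layer
`B_i`, the second the union `B_1 ∪ ⋯ ∪ B_i`; `A_i = Γ_S(B_i)` and
`B_{i+1} = Γ_E(A_i) \ (B_1 ∪ ⋯ ∪ B_i)`. -/
def layers (E S : Finset (α × β)) (b : β) : ℕ → Finset β × Finset β
  | 0 => ({b}, {b})
  | (i + 1) =>
    let P := layers E S b i
    let Ai : Finset α := Finset.univ.filter fun a => ∃ b' ∈ P.1, (a, b') ∈ S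
    let Bn : Finset β :=
      (Finset.univ.filter fun b'' => ∃ a ∈ Ai, (a, b'') ∈ E) \ P.2
    (Bn, P.2 ∪ Bn)

lemma semi_unique_s15 {S : Finset (α × β)} {a : α} (h : degA S a = 1)
    {x y : β} (hx : (a, x) ∈ S) (hy : (a, y) ∈ S) : x = y := by
  have hx' : ((a, x) : α × β) ∈ S.filter (fun e => e.1 = a) := mem_filter.2 ⟨hx, rfl⟩
  have hy' : ((a, y) : α × β) ∈ S.filter (fun e => e.1 = a) := mem_filter.2 ⟨hy, rfl⟩
  have := Finset.card_le_one.mp (le_of_eq h) _ hx' _ hy'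
  exact congrArg Prod.snd this

lemma L1_subset_L2 (E S : Finset (α × β)) (b : β) :
    ∀ i, (layers E S b i).1 ⊆ (layers E S b i).2 := by
  intro i
  cases i with
  | zero => exact Finset.Subset.refl _
  | succ n => exact Finset.subset_union_right

lemma L2_mono (E S : Finset (α × β)) (b : β) {l m : ℕ} (h : l ≤ m) :
    (layers E S b l).2 ⊆ (layers E S b m).2 := by
  induction m with
  | zero => simp_all
  | succ n ih =>
    rcases Nat.lt_or_ge l (n+1) with h' | h'
    · exact (ih (Nat.lt_succ_iff.mp h')).trans Finset.subset_union_left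
    · have : l = n + 1 := le_antisymm h h'
      subst this; exact Finset.Subset.refl _

lemma L1_notmem_L2 (E S : Finset (α × β)) (b : β) {i : ℕ} {x : β}
    (hx : x ∈ (layers E S b (i+1)).1) : x ∉ (layers E S b i).2 := by
  simp only [layers, Finset.mem_sdiff] at hx
  exact hx.2

lemma L1_disjoint (E S : Finset (α × β)) (b : β) {l m : ℕ} (h : l < m) {x : β}
    (hx : x ∈ (layers E S b l).1) (hy : x ∈ (layers E S b m).1) : False := by
  obtain ⟨t, rfl⟩ : ∃ t, m = t + 1 := ⟨m - 1, (Nat.succ_pred_eq_of_pos (by omega)).symm⟩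
  exact (L1_notmem_L2 E S b hy)
    (L2_mono E S b (Nat.lt_succ_iff.mp h) (L1_subset_L2 E S b l hx))

lemma layers_step (E S : Finset (α × β)) (hS : IsSemi Finset.univ E S) (b : β) {i : ℕ} {b'' : β}
    (hx : b'' ∈ (layers E S b (i+1)).1) :
    ∃ (a : α) (b3 : β), b3 ∈ (layers E S b i).1 ∧ (a, b3) ∈ S ∧ (a, b'') ∈ E ∧
      (a, b'') ∉ S := by
  have hx' := hx
  simp only [layers, Finset.mem_sdiff, Finset.mem_filter, Finset.mem_univ, true_and] at hx'
  obtain ⟨⟨a, ha, haE⟩, hnot⟩ := hx'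
  obtain ⟨b3, hb3, hb3S⟩ := ha
  refine ⟨a, b3, hb3, hb3S, haE, fun hmem => ?_⟩
  have : b'' = b3 := semi_unique_s15 (hS.2.2 a (Finset.mem_univ a)) hmem hb3S
  subst this
  exact (L1_notmem_L2 E S b hx) (L1_subset_L2 E S b i hb3)

lemma path_exists (E S : Finset (α × β)) (hS : IsSemi Finset.univ E S) (b : β) (a₀ : α) :
    ∀ n : ℕ, ∀ b' ∈ (layers E S b n).1,
      ∃ (p : ℕ → β) (a : ℕ → α), p n = b' ∧ (∀ l ≤ n, p l ∈ (layers E S b l).1) ∧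
        ∀ l < n, (a l, p l) ∈ S ∧ (a l, p (l+1)) ∈ E ∧ (a l, p (l+1)) ∉ S := by
  intro n
  induction n with
  | zero =>
    intro b' hb'
    exact ⟨fun _ => b', fun _ => a₀, rfl,
      fun l hl => by simpa [Nat.le_zero.mp hl] using hb', fun l hl => absurd hl (by omega)⟩
  | succ n ih =>
    intro b' hb'
    obtain ⟨a1, b3, hb3, hb3S, haE, haNS⟩ := layers_step E S hS b hb'
    obtain ⟨p, a, hpn, hpl, hstep⟩ := ih b3 hb3
    refine ⟨Function.update p (n+1) b', Function.update a n a1, Function.update_self _ _ _,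
      ?_, ?_⟩
    · intro l hl
      rcases Nat.lt_or_ge l (n+1) with h' | h'
      · rw [Function.update_of_ne (by omega)]
        exact hpl l (by omega)
      · have : l = n + 1 := le_antisymm hl h'
        subst this
        rw [Function.update_self]
        exact hb'
    · intro l hl
      rcases Nat.lt_or_ge l n with h' | h'
      · rw [Function.update_of_ne (show l ≠ n by omega),
          Function.update_of_ne (show l ≠ n + 1 by omega),
          Function.update_of_ne (show l + 1 ≠ n + 1 by omega)]
        exact hstep l h'
      · have : l = n := by omega
        subst this
        rw [Function.update_self, Function.update_of_ne (show l ≠ l + 1 by omega),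
          Function.update_self, hpn]
        exact ⟨hb3S, haE, haNS⟩

/-- If a semi-matching `S` admits no degree-minimizing path and `deg_S(b) ≥ d + 1`, then
every vertex `b'` in any of the layers `B_i` grown from `b` satisfies
`deg_S(b') ≥ deg_S(b) − 1`. -/
theorem layers_degree_lower_bound (E S : Finset (α × β))
    (hS : IsSemi Finset.univ E S) (hno : NoDegMinPath E S)
    (b : β) (d : ℕ) (hd : 1 ≤ d) (hb : d + 1 ≤ degB S b) :
    ∀ i : ℕ, ∀ b' ∈ (layers E S b i).1, degB S b ≤ degB S b' + 1 := by
  intro i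
  induction i using Nat.strong_induction_on with
  | _ n IH =>
    intro b' hb'
    by_contra hcon
    push_neg at hcon
    have hcon : degB S b' + 2 ≤ degB S b := hcon
    -- rule out n = 0
    obtain ⟨m, rfl⟩ : ∃ m, n = m + 1 := by
      cases n with
      | zero =>
        have : b' = b := by simpa [layers] using hb'
        subst this; omega
      | succ m => exact ⟨m, rfl⟩
    set n := m + 1 with hn
    obtain ⟨a₀, _, _, _, _, _⟩ := layers_step E S hS b hb'
    obtain ⟨p, a, hpn, hpl, hstep⟩ := path_exists E S hS b a₀ n b' hb'
    have hp0 : p 0 = b := by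
      have := hpl 0 (Nat.zero_le n)
      simpa [layers] using this
    set P : ℕ → Prop := fun l => degB S b' + 2 ≤ degB S (p l) with hP
    have hP0 : P 0 := by simp [hP, hp0, hcon]
    set j := Nat.findGreatest P n with hj
    have hPj : P j := Nat.findGreatest_spec (Nat.zero_le n) hP0
    have hjle : j ≤ n := Nat.findGreatest_le n
    have hjn : j < n := by
      rcases lt_or_eq_of_le hjle with h | h
      · exact h
      · exfalso
        have := hPj
        rw [h, hP] at this
        simp only [hpn] at this
        omega
    have hmid : ∀ l, j < l → l < n → degB S (p l) = degB S b' + 1 := by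
      intro l hl1 hl2
      have h1 : ¬ P l := Nat.findGreatest_is_greatest hl1 (le_of_lt hl2)
      rw [hP] at h1
      push_neg at h1
      have h2 := IH l hl2 (p l) (hpl l (le_of_lt hl2))
      omega
    have hpinj : ∀ l l', l ≤ n → l' ≤ n → p l = p l' → l = l' := by
      intro l l' hl hl' hpe
      by_contra hne
      rcases Nat.lt_or_ge l l' with h | h
      · exact L1_disjoint E S b h (hpl l hl) (hpe ▸ hpl l' hl')
      · have h : l' < l := by omega
        exact L1_disjoint E S b h (hpl l' hl') (hpe.symm ▸ hpl l hl)
    set k := n - j with hk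
    have hk0 : 0 < k := by omega
    set aF : Fin k → α := fun i => a (j + (i : ℕ)) with haF
    set bF : Fin (k + 1) → β := fun i => p (j + (i : ℕ)) with hbF
    refine hno k aF bF ⟨hk0, ?_, ?_, ?_, ?_, ?_, ?_⟩
    · -- injective aF
      intro i i' he
      have hi : j + (i : ℕ) < n := by have := i.2; omega
      have hi' : j + (i' : ℕ) < n := by have := i'.2; omega
      have h1 := (hstep _ hi).1
      have h2 := (hstep _ hi').1
      rw [haF] at he
      simp only at he
      rw [he] at h1
      have := semi_unique_s15 (hS.2.2 _ (Finset.mem_univ _)) h1 h2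
      have := hpinj _ _ (le_of_lt hi) (le_of_lt hi') this
      exact Fin.ext (by omega)
    · -- injective bF
      intro i i' he
      have hi : j + (i : ℕ) ≤ n := by have := i.2; omega
      have hi' : j + (i' : ℕ) ≤ n := by have := i'.2; omega
      have := hpinj _ _ hi hi' he
      exact Fin.ext (by omega)
    · intro i
      have hi : j + (i : ℕ) < n := by have := i.2; omega
      simpa [haF, hbF] using (hstep _ hi).1
    · intro i
      have hi : j + (i : ℕ) < n := by have := i.2; omega
      have h := hstep _ hi
      constructor
      · simpa [haF, hbF, Nat.add_assoc] using h.2.1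
      · simpa [haF, hbF, Nat.add_assoc] using h.2.2
    · -- degrees non-increasing
      intro i
      have hi : j + (i : ℕ) < n := by have := i.2; omega
      have hsrc : degB S b' + 1 ≤ degB S (p (j + (i : ℕ))) := by
        rcases Nat.eq_zero_or_pos (i : ℕ) with h0 | h0
        · rw [h0]
          have := hPj; rw [hP] at this; simpa using (by omega : degB S b' + 1 ≤ degB S (p j))
        · have := hmid (j + (i : ℕ)) (by omega) hi
          omega
      have htgt : degB S (p (j + (i : ℕ) + 1)) ≤ degB S b' + 1 := by
        rcases Nat.lt_or_ge (j + (i : ℕ) + 1) n with h | h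
        · rw [hmid _ (by omega) h]
        · have : j + (i : ℕ) + 1 = n := by omega
          rw [this, hpn]
          omega
      simp only [hbF, Fin.coe_castSucc, Fin.val_succ]
      calc degB S (p (j + ((i : ℕ) + 1))) = degB S (p (j + (i : ℕ) + 1)) := by
            rw [Nat.add_assoc]
        _ ≤ degB S b' + 1 := htgt
        _ ≤ degB S (p (j + (i : ℕ))) := hsrc
    · -- total drop
      have hlast : bF (Fin.last k) = b' := by
        rw [hbF]
        simp only [Fin.val_last]
        have : j + k = n := by omega
        rw [this, hpn]
      have h0 : bF 0 = p j := by
        rw [hbF]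
        norm_num
      rw [hlast, h0]
      have := hPj; rw [hP] at this
      exact this
end
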